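/- arXiv:2510.01507 — 7 statements merged into one kernel-verified Lean document; each statement's English description precedes it below -/
import Mathlib

section
/- Let T ∈ (0,∞] and A, R ≥ 1. Let {a_n}_{n≥1} be a sequence of differentiable maps a_n : [0,T) → [0,∞) (with the convention a_0 = a_{-1} = 0) satisfying, for all n ≥ 1 and t ∈ [0,T), the hierarchy of differential inequalities a_n'(t) ≤ n(a_n(t) + a_{n+1}(t)) + n³R^{-2}(a_{n-1}(t) + a_{n-2}(t)), together with the initial bounds a_n(0) ≤ n^{2n}(A R^{-1})^n. Assume further the a priori estimates a_n(t) ≤ B^n for all n ≥ 1 and t ∈ [0,T), for some B ≥ 1. Then there exists a constant C ≥ 1, depending only on B (and not on T, A, R), such that for all n ≥ 1 and t ∈ [0,T) one has a_n(t) ≤ e^{Cnt}(Cn²)^n (A R^{-1})^n. -/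
open scoped ENNReal
open Set Filter Topology Real

/-!
Continuous induction in time on the bounds `a n ≤ Φₙ := (e^{Cs} C n² ε) ^ n` for all `n` at once,
with `ε = A / R` and `C = 120 B`. Call `n` active at time `s` while `Φₙ(s) < Bⁿ`; an inactive
index is controlled by the a priori estimate. For an active index the couplings are small,
`Φₙ₊₁ ≤ 36 B Φₙ` and `n³ R⁻² (Φₙ₋₁ + Φₙ₋₂) ≤ 2 B n Φₙ`, so `Φₙ / 3` is a strict supersolution
of the `n`-th inequality and comparison gives `a n ≤ Φₙ / 3`. As `Φₙ(s) → ∞` when `n → ∞`, only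
finitely many indices are active at a time, and their margin pushes the bounds past any time up
to which they hold.
-/

/-- `hierarchyBound C ε n s = e^{Cns} (C n² ε)ⁿ` is the `n`-th power of this ratio, so `n` is
active at time `s` exactly when `growthRatio C ε n s < B`. -/
noncomputable def growthRatio (C ε : ℝ) (n : ℕ) (s : ℝ) : ℝ :=
  exp (C * s) * (C * n ^ 2 * ε)

noncomputable def hierarchyBound (C ε : ℝ) (n : ℕ) (s : ℝ) : ℝ :=
  growthRatio C ε n s ^ n

section Bounds

variable {B C ε s : ℝ} {k n : ℕ}

lemma growthRatio_nonneg (hC : 0 ≤ C) (hε : 0 ≤ ε) (n : ℕ) (s : ℝ) :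
    0 ≤ growthRatio C ε n s := by
  unfold growthRatio; positivity

lemma growthRatio_le_growthRatio (hC : 0 ≤ C) (hε : 0 ≤ ε) {t : ℝ} (hkn : k ≤ n)
    (hst : s ≤ t) :
    growthRatio C ε k s ≤ growthRatio C ε n t := by
  unfold growthRatio
  gcongr

lemma growthRatio_succ (hn : n ≠ 0) :
    growthRatio C ε (n + 1) s = (1 + 1 / n) ^ 2 * growthRatio C ε n s := by
  unfold growthRatio
  push_cast
  field_simp

lemma sq_mul_le_growthRatio (hC : 1 ≤ C) (hε : 0 ≤ ε) (hs : 0 ≤ s) :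
    (n : ℝ) ^ 2 * ε ≤ growthRatio C ε n s := by
  unfold growthRatio
  have : 1 ≤ exp (C * s) := one_le_exp (by positivity)
  calc (n : ℝ) ^ 2 * ε = 1 * (1 * n ^ 2 * ε) := by ring
    _ ≤ exp (C * s) * (C * n ^ 2 * ε) := by gcongr

lemma tendsto_growthRatio_atTop (hC : 0 < C) (hε : 0 < ε) (s : ℝ) :
    Tendsto (fun n : ℕ ↦ growthRatio C ε n s) atTop atTop :=
  ((((tendsto_pow_atTop two_ne_zero).comp tendsto_natCast_atTop_atTop).const_mul_atTop
    hC).atTop_mul_const hε).const_mul_atTop (exp_pos _)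

lemma finite_setOf_growthRatio_lt (hC : 0 < C) (hε : 0 < ε) (B s : ℝ) :
    {n | growthRatio C ε n s < B}.Finite := by
  refine (Filter.eventually_cofinite.1 ?_).subset fun n (hn : _ < B) ↦ hn.not_ge
  exact Nat.cofinite_eq_atTop ▸ (tendsto_growthRatio_atTop hC hε s).eventually_ge_atTop B

lemma hierarchyBound_eq (C ε : ℝ) (n : ℕ) (s : ℝ) :
    hierarchyBound C ε n s = exp (C * n * s) * (C * (n : ℝ) ^ 2) ^ n * ε ^ n := by
  rw [hierarchyBound, growthRatio, mul_pow, ← exp_nat_mul, mul_pow]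
  ring_nf

lemma hasDerivAt_hierarchyBound (C ε : ℝ) (n : ℕ) (s : ℝ) :
    HasDerivAt (hierarchyBound C ε n) (C * n * hierarchyBound C ε n s) s := by
  have h := (((hasDerivAt_id' s).const_mul (C * n)).exp.mul_const
    ((C * (n : ℝ) ^ 2) ^ n)).mul_const (ε ^ n)
  rw [show hierarchyBound C ε n = _ from funext (hierarchyBound_eq C ε n)]
  exact h.congr_deriv (by ring)

lemma hierarchyBound_nonneg (hC : 0 ≤ C) (hε : 0 ≤ ε) (n : ℕ) (s : ℝ) :
    0 ≤ hierarchyBound C ε n s :=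
  pow_nonneg (growthRatio_nonneg hC hε n s) n

lemma hierarchyBound_pos (hC : 0 < C) (hε : 0 < ε) (n : ℕ) (s : ℝ) :
    0 < hierarchyBound C ε n s := by
  rw [hierarchyBound_eq]
  rcases n.eq_zero_or_pos with rfl | hn
  · simp
  · positivity

lemma three_mul_le_hierarchyBound_zero (hC : 3 ≤ C) (hε : 0 ≤ ε) (hn : n ≠ 0) :
    3 * ((n : ℝ) ^ (2 * n) * ε ^ n) ≤ hierarchyBound C ε n 0 := by
  have h3 : 3 ≤ C ^ n := hC.trans (le_self_pow₀ (by linarith) hn)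
  rw [hierarchyBound_eq, mul_zero, exp_zero, one_mul, mul_pow, pow_mul, mul_assoc]
  gcongr

lemma hierarchyBound_succ_le (hC : 0 ≤ C) (hε : 0 ≤ ε) (hn : n ≠ 0)
    (hact : growthRatio C ε n s ≤ B) :
    hierarchyBound C ε (n + 1) s ≤ 36 * B * hierarchyBound C ε n s := by
  set r := growthRatio C ε n s
  have hr : 0 ≤ r := growthRatio_nonneg hC hε n s
  have hinv : 1 / (n : ℝ) ≤ 1 := by
    rw [div_le_one (by positivity)]; exact_mod_cast Nat.one_le_iff_ne_zero.2 hn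
  have hexp : (1 + 1 / (n : ℝ)) ^ n ≤ 3 := calc
    (1 + 1 / (n : ℝ)) ^ n ≤ exp (1 / n) ^ n := by
      gcongr; linarith [add_one_le_exp (1 / (n : ℝ))]
    _ = exp 1 := by rw [← exp_nat_mul]; field_simp
    _ ≤ 3 := exp_one_lt_three.le
  calc hierarchyBound C ε (n + 1) s
      = ((1 + 1 / (n : ℝ)) ^ n) ^ 2 * (1 + 1 / (n : ℝ)) ^ 2 * r * r ^ n := by
        rw [hierarchyBound, growthRatio_succ hn, mul_pow, pow_succ, ← pow_mul, ← pow_mul]; ring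
    _ ≤ 3 ^ 2 * 2 ^ 2 * B * r ^ n := by gcongr; linarith
    _ = 36 * B * hierarchyBound C ε n s := by rw [hierarchyBound]; ring

lemma sq_mul_sq_mul_hierarchyBound_le (hB : 1 ≤ B) (hC : 1 ≤ C) (hε : 0 ≤ ε) (hs : 0 ≤ s)
    (hkn : k < n) (hnk : n ≤ k + 2) (hact : growthRatio C ε n s ≤ B) :
    (n : ℝ) ^ 2 * ε ^ 2 * hierarchyBound C ε k s ≤ B * hierarchyBound C ε n s := by
  set r := growthRatio C ε n s
  have hr0 : 0 ≤ r := growthRatio_nonneg (by linarith) hε n s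
  have hr : (n : ℝ) ^ 2 * ε ≤ r := sq_mul_le_growthRatio hC hε hs
  have hn : (1 : ℝ) ≤ n ^ 2 := one_le_pow₀ (by exact_mod_cast (k.zero_le.trans_lt hkn))
  have hεr : ε ≤ r := le_trans (by nlinarith) hr
  have hεB : ε * r ≤ B * r ^ (n - k) := by
    rcases (show n - k = 1 ∨ n - k = 2 by omega) with h | h <;> rw [h] <;> nlinarith
  have hk : hierarchyBound C ε k s ≤ r ^ k :=
    pow_le_pow_left₀ (growthRatio_nonneg (by linarith) hε k s)
      (growthRatio_le_growthRatio (by linarith) hε hkn.le le_rfl) k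
  calc (n : ℝ) ^ 2 * ε ^ 2 * hierarchyBound C ε k s ≤ (r * ε) * r ^ k := by
        rw [sq ε, ← mul_assoc]; gcongr; exact hierarchyBound_nonneg (by linarith) hε k s
    _ ≤ (B * r ^ (n - k)) * r ^ k := by rw [mul_comm r]; gcongr
    _ = B * hierarchyBound C ε n s := by
        rw [hierarchyBound, mul_assoc, ← pow_add, Nat.sub_add_cancel hkn.le]

lemma hierarchyBound_coupling_le {R : ℝ} (hB : 1 ≤ B) (hC : 1 ≤ C) (hR : 0 < R)
    (hεR : R⁻¹ ≤ ε) (hn : 1 ≤ n) (hs : 0 ≤ s) (hact : growthRatio C ε n s ≤ B) :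
    n * hierarchyBound C ε (n + 1) s
      + n ^ 3 / R ^ 2 * (hierarchyBound C ε (n - 1) s + hierarchyBound C ε (n - 2) s)
      ≤ 38 * B * n * hierarchyBound C ε n s := by
  have hε : 0 ≤ ε := (inv_pos.2 hR).le.trans hεR
  have hR2 : (n : ℝ) ^ 3 / R ^ 2 ≤ n * (n ^ 2 * ε ^ 2) := calc
    (n : ℝ) ^ 3 / R ^ 2 = n * (n ^ 2 * R⁻¹ ^ 2) := by field_simp
    _ ≤ n * (n ^ 2 * ε ^ 2) := by gcongr
  have hup := hierarchyBound_succ_le (by linarith) hε (by omega) hact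
  have h1 := sq_mul_sq_mul_hierarchyBound_le hB hC hε hs (k := n - 1) (by omega) (by omega) hact
  have h2 := sq_mul_sq_mul_hierarchyBound_le hB hC hε hs (k := n - 2) (by omega) (by omega) hact
  have hΦ : 0 ≤ hierarchyBound C ε (n - 1) s + hierarchyBound C ε (n - 2) s :=
    add_nonneg (hierarchyBound_nonneg (by linarith) hε _ s)
      (hierarchyBound_nonneg (by linarith) hε _ s)
  linear_combination (n : ℝ) * hup + (n : ℝ) * (h1 + h2)
    + (hierarchyBound C ε (n - 1) s + hierarchyBound C ε (n - 2) s) * hR2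

end Bounds

/-- For `n = 1` both `n - 1` and `n - 2` are `0` in `ℕ`; with `a 0 = 0` this is the convention
`a₀ = a₋₁ = 0`. -/
structure IsHierarchySubsolution (R t : ℝ) (a : ℕ → ℝ → ℝ) : Prop where
  zero : ∀ x, a 0 x = 0
  differentiableAt : ∀ n, 1 ≤ n → ∀ x ∈ Icc 0 t, DifferentiableAt ℝ (a n) x
  deriv_le : ∀ n, 1 ≤ n → ∀ x ∈ Icc 0 t,
    deriv (a n) x ≤ n * (a n x + a (n + 1) x) + n ^ 3 / R ^ 2 * (a (n - 1) x + a (n - 2) x)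

namespace IsHierarchySubsolution

variable {R t B C ε τ : ℝ} {a : ℕ → ℝ → ℝ} {n : ℕ}

lemma continuousAt (ha : IsHierarchySubsolution R t a) (n : ℕ) {x : ℝ} (hx : x ∈ Icc 0 t) :
    ContinuousAt (a n) x := by
  rcases n.eq_zero_or_pos with rfl | hn
  · rw [show a 0 = fun _ ↦ 0 from funext ha.zero]
    exact continuousAt_const
  · exact (ha.differentiableAt n hn x hx).continuousAt

lemma le_hierarchyBound_div_three (ha : IsHierarchySubsolution R t a) (hB : 1 ≤ B)
    (hC : 120 * B ≤ C) (hR : 0 < R) (hεR : R⁻¹ ≤ ε) (hn : 1 ≤ n)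
    (hinit : a n 0 ≤ n ^ (2 * n) * ε ^ n) (hτ : τ ∈ Icc 0 t)
    (hbound : ∀ k, ∀ x ∈ Icc 0 τ, a k x ≤ hierarchyBound C ε k x)
    (hact : growthRatio C ε n τ ≤ B) :
    a n τ ≤ hierarchyBound C ε n τ / 3 := by
  have hε : 0 < ε := (inv_pos.2 hR).trans_le hεR
  have hC0 : 0 < C := by linarith
  have hsub : Icc 0 τ ⊆ Icc 0 t := Icc_subset_Icc_right hτ.2
  refine image_le_of_deriv_right_lt_deriv_boundary (f' := deriv (a n))
    (fun x hx ↦ (ha.continuousAt n (hsub hx)).continuousWithinAt)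
    (fun x hx ↦
      (ha.differentiableAt n hn x (hsub (Ico_subset_Icc_self hx))).hasDerivAt.hasDerivWithinAt)
    ?_ (fun x ↦ (hasDerivAt_hierarchyBound C ε n x).div_const 3) ?_ ⟨hτ.1, le_rfl⟩
  · have := three_mul_le_hierarchyBound_zero (C := C) (by linarith) hε.le (by omega : n ≠ 0)
    linarith
  · intro x hx hax
    have hx' : x ∈ Icc 0 τ := Ico_subset_Icc_self hx
    have hcoupling := hierarchyBound_coupling_le hB (by linarith) hR hεR hn hx'.1
      ((growthRatio_le_growthRatio hC0.le hε.le le_rfl hx'.2).trans hact)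
    have hnΦ : 0 < n * hierarchyBound C ε n x :=
      mul_pos (by exact_mod_cast hn) (hierarchyBound_pos hC0 hε n x)
    calc deriv (a n) x
        ≤ n * (a n x + a (n + 1) x) + n ^ 3 / R ^ 2 * (a (n - 1) x + a (n - 2) x) :=
          ha.deriv_le n hn x (hsub hx')
      _ ≤ n * (hierarchyBound C ε n x / 3 + hierarchyBound C ε (n + 1) x)
          + n ^ 3 / R ^ 2 * (hierarchyBound C ε (n - 1) x + hierarchyBound C ε (n - 2) x) := by
          rw [hax]
          gcongr <;> exact hbound _ x hx'
      _ < C * n * hierarchyBound C ε n x / 3 := by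
          nlinarith [mul_le_mul_of_nonneg_right hC hnΦ.le]

lemma isClosed_setOf_le_hierarchyBound (ha : IsHierarchySubsolution R t a) (C ε : ℝ) :
    IsClosed ({x | ∀ k, a k x ≤ hierarchyBound C ε k x} ∩ Icc 0 t) := by
  have h k : IsClosed {x ∈ Icc 0 t | a k x ≤ hierarchyBound C ε k x} :=
    isClosed_Icc.isClosed_le (fun x hx ↦ (ha.continuousAt k hx).continuousWithinAt)
      fun x _ ↦ (hasDerivAt_hierarchyBound C ε k x).continuousAt.continuousWithinAt
  convert isClosed_iInter h using 1
  ext x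
  simp only [mem_inter_iff, mem_ofPred_eq, mem_iInter]
  exact ⟨fun h k ↦ ⟨h.2, h.1 k⟩, fun h ↦ ⟨fun k ↦ (h k).2, (h 0).1⟩⟩

lemma setOf_le_hierarchyBound_mem_nhdsGT (ha : IsHierarchySubsolution R t a) (hB : 1 ≤ B)
    (hC : 120 * B ≤ C) (hR : 0 < R) (hεR : R⁻¹ ≤ ε)
    (hinit : ∀ n, 1 ≤ n → a n 0 ≤ n ^ (2 * n) * ε ^ n)
    (hapriori : ∀ n, 1 ≤ n → ∀ x ∈ Icc 0 t, a n x ≤ B ^ n) {τ : ℝ} (hτ : τ ∈ Ico 0 t)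
    (hbound : Icc 0 τ ⊆ {x | ∀ k, a k x ≤ hierarchyBound C ε k x}) :
    {x | ∀ k, a k x ≤ hierarchyBound C ε k x} ∈ 𝓝[>] τ := by
  have hε : 0 < ε := (inv_pos.2 hR).trans_le hεR
  have hC0 : 0 < C := by linarith
  have hτ' : τ ∈ Icc 0 t := Ico_subset_Icc_self hτ
  set active := {n | growthRatio C ε n τ < B}
  have hstrict : ∀ n ∈ active, a n τ < hierarchyBound C ε n τ := by
    intro n hn
    rcases n.eq_zero_or_pos with rfl | hn0
    · simp [ha.zero, hierarchyBound]
    · have := ha.le_hierarchyBound_div_three hB hC hR hεR hn0 (hinit n hn0) hτ'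
        (fun k x hx ↦ hbound hx k) hn.le
      linarith [hierarchyBound_pos hC0 hε n τ]
  have hactive : ∀ᶠ x in 𝓝[>] τ, ∀ n ∈ active, a n x < hierarchyBound C ε n x :=
    nhdsWithin_le_nhds <| (eventually_all_finite (finite_setOf_growthRatio_lt hC0 hε B τ)).2
      fun n hn ↦ (ha.continuousAt n hτ').eventually_lt
        (hasDerivAt_hierarchyBound C ε n τ).continuousAt (hstrict n hn)
  filter_upwards [hactive, Ioo_mem_nhdsGT hτ.2] with x hx hxt n
  by_cases hn : n ∈ active
  · exact (hx n hn).le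
  · have hx' : x ∈ Icc 0 t := ⟨hτ.1.trans hxt.1.le, hxt.2.le⟩
    have hBn : B ≤ growthRatio C ε n x := (not_lt.1 hn).trans
      (growthRatio_le_growthRatio hC0.le hε.le le_rfl hxt.1.le)
    have hn0 : n ≠ 0 := by
      rintro rfl
      have : growthRatio C ε 0 x = 0 := by simp [growthRatio]
      linarith
    exact (hapriori n (Nat.one_le_iff_ne_zero.2 hn0) x hx').trans
      (pow_le_pow_left₀ (by linarith) hBn n)

theorem le_hierarchyBound (ha : IsHierarchySubsolution R t a) (hB : 1 ≤ B) (hC : 120 * B ≤ C)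
    (hR : 0 < R) (hεR : R⁻¹ ≤ ε) (hinit : ∀ n, 1 ≤ n → a n 0 ≤ n ^ (2 * n) * ε ^ n)
    (hapriori : ∀ n, 1 ≤ n → ∀ x ∈ Icc 0 t, a n x ≤ B ^ n) :
    ∀ x ∈ Icc 0 t, ∀ n, a n x ≤ hierarchyBound C ε n x := by
  refine (ha.isClosed_setOf_le_hierarchyBound C ε).Icc_subset_of_forall_mem_nhdsGT_of_Icc_subset
    ?_ fun τ hτ hbound ↦
      ha.setOf_le_hierarchyBound_mem_nhdsGT hB hC hR hεR hinit hapriori hτ hbound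
  intro n
  rcases n.eq_zero_or_pos with rfl | hn
  · simp [ha.zero, hierarchyBound]
  · have hε : 0 ≤ ε := (inv_pos.2 hR).le.trans hεR
    have := three_mul_le_hierarchyBound_zero (C := C) (by linarith) hε (by omega : n ≠ 0)
    have : 0 ≤ (n : ℝ) ^ (2 * n) * ε ^ n := by positivity
    linarith [hinit n hn]

end IsHierarchySubsolution

/-- Lemma 2.1 of the paper, global hierarchical estimates.
Given `B ≥ 1`, there is a constant `C ≥ 1` depending only on `B` (and not on `T`, `A`, `R`)
such that: for any `T ∈ (0,∞]`, any `A, R ≥ 1`, and any sequence of nonnegative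
differentiable maps `a_n : [0,T) → [0,∞)` (with the convention `a_0 = a_{−1} = 0`)
satisfying the hierarchy of differential inequalities
`a_n' ≤ n(a_n + a_{n+1}) + n³R^{−2}(a_{n−1} + a_{n−2})` on `[0,T)` with initial bounds
`a_n(0) ≤ n^{2n}(AR^{−1})^n` and the a priori estimates `a_n ≤ B^n` on `[0,T)`,
one has `a_n(t) ≤ e^{Cnt}(Cn²)^n (AR^{−1})^n` for all `n ≥ 1` and `t ∈ [0,T)`. -/
theorem global_hierarchical_estimates (B : ℝ) (hB : 1 ≤ B) :
    ∃ C : ℝ, 1 ≤ C ∧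
      ∀ (T : ℝ≥0∞) (_hT : 0 < T) (A R : ℝ) (_hA : 1 ≤ A) (_hR : 1 ≤ R)
        (a : ℕ → ℝ → ℝ)
        (_ha0 : ∀ t : ℝ, a 0 t = 0)
        (_hnonneg : ∀ n, 1 ≤ n → ∀ t : ℝ, 0 ≤ t → ENNReal.ofReal t < T → 0 ≤ a n t)
        (_hdiff : ∀ n, 1 ≤ n → ∀ t : ℝ, 0 ≤ t → ENNReal.ofReal t < T →
          DifferentiableAt ℝ (a n) t)
        (_hineq : ∀ n, 1 ≤ n → ∀ t : ℝ, 0 ≤ t → ENNReal.ofReal t < T →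
          deriv (a n) t ≤ (n : ℝ) * (a n t + a (n + 1) t)
            + (n : ℝ) ^ 3 / R ^ 2 * (a (n - 1) t + a (n - 2) t))
        (_hinit : ∀ n, 1 ≤ n → a n 0 ≤ (n : ℝ) ^ (2 * n) * (A / R) ^ n)
        (_hapriori : ∀ n, 1 ≤ n → ∀ t : ℝ, 0 ≤ t → ENNReal.ofReal t < T →
          a n t ≤ B ^ n),
        ∀ n, 1 ≤ n → ∀ t : ℝ, 0 ≤ t → ENNReal.ofReal t < T →
          a n t ≤ Real.exp (C * n * t) * (C * (n : ℝ) ^ 2) ^ n * (A / R) ^ n := by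
  refine ⟨120 * B, by linarith,
    fun T _ A R hA hR a ha0 _ hdiff hineq hinit hapriori n _ t ht htT ↦ ?_⟩
  have hlt {x : ℝ} (hx : x ∈ Icc 0 t) : ENNReal.ofReal x < T :=
    (ENNReal.ofReal_le_ofReal hx.2).trans_lt htT
  have ha : IsHierarchySubsolution R t a :=
    ⟨ha0, fun n hn x hx ↦ hdiff n hn x hx.1 (hlt hx), fun n hn x hx ↦ hineq n hn x hx.1 (hlt hx)⟩
  have hεR : R⁻¹ ≤ A / R := by
    rw [div_eq_mul_inv]; exact le_mul_of_one_le_left (by positivity) hA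
  rw [← hierarchyBound_eq]
  exact ha.le_hierarchyBound hB le_rfl (by positivity) hεR hinit
    (fun n hn x hx ↦ hapriori n hn x hx.1 (hlt hx)) t ⟨ht, le_rfl⟩ n
end

section
/- Let (Z, μ) be a measure space and N ≥ 2. For 1 ≤ k ≤ N let F_k ∈ L¹(μ^{⊗k}) be symmetric functions satisfying the marginal consistency relations: ∫_Z F_1 dμ = 1, and for all 2 ≤ k ≤ N, ∫_Z F_k(z_1,…,z_{k−1}, z) dμ(z) = F_{k−1}(z_1,…,z_{k−1}) for μ^{⊗(k−1)}-almost every (z_1,…,z_{k−1}). Define correlation functions G_m : Z^m → ℝ for 1 ≤ m ≤ N by G_m(z_1,…,z_m) = Σ_{π ⊢ [m]} (#π − 1)! (−1)^{#π−1} Π_{B ∈ π} F_{#B}(z_B). Then the correlation functions are maximal (centered): for every 2 ≤ m ≤ N and every 1 ≤ ℓ ≤ m, ∫_Z G_m(z_1,…,z_m) dμ(z_ℓ) = 0 for μ^{⊗(m−1)}-almost every (z_i)_{i ∈ [m]∖{ℓ}}. -/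
open Finset MeasureTheory

/-- Evaluation of a family of functions `F_k : Z^k → ℝ` on the sub-tuple `z_B` of
`z = (z_1,…,z_m)` indexed by a subset `B ⊆ [m]`, taken in increasing order. -/
noncomputable def blockEval {Z : Type*} (F : (k : ℕ) → (Fin k → Z) → ℝ) {m : ℕ}
    (z : Fin m → Z) (B : Finset (Fin m)) : ℝ :=
  F B.card (fun j => z (B.orderEmbOfFin rfl j))

/-- The correlation functions defined by Möbius inversion over set partitions:
`G_m(z) = Σ_{π ⊢ [m]} (#π − 1)! (−1)^{#π−1} Π_{B ∈ π} F_{#B}(z_B)`. -/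
noncomputable def mobiusCorrelation {Z : Type*} (F : (k : ℕ) → (Fin k → Z) → ℝ) (m : ℕ)
    (z : Fin m → Z) : ℝ :=
  ∑ π : Finpartition (Finset.univ : Finset (Fin m)),
    ((π.parts.card - 1).factorial : ℝ) * (-1 : ℝ) ^ (π.parts.card - 1) *
      ∏ B ∈ π.parts, blockEval F z B

/-!
Integrate `G_m` in `z_ℓ` term by term. In the term of a partition `π`, only the block containing
`ℓ` depends on `z_ℓ`; by symmetry and marginal consistency, integrating it out replaces it by
`F` on the block with `ℓ` removed (by `1` when the block is `{ℓ}`). The result depends only on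
the partition `π'` of `[m] ∖ {ℓ}` induced by `π`. Each `π'` is induced by one partition with
`#π' + 1` blocks (`ℓ` alone) and by `#π'` partitions with `#π'` blocks (`ℓ` added to a block of
`π'`), and the coefficients `c_j = (j - 1)! (-1)^(j - 1)` satisfy `c_(j+1) + j c_j = 0`.
-/

section Measure

variable {Z : Type*} [MeasurableSpace Z] (μ : Measure Z) [SigmaFinite μ]

theorem quasiMeasurePreserving_comp_of_injective {ι κ : Type*} [Fintype ι] [Fintype κ]
    {e : ι → κ} (he : Function.Injective e) :
    Measure.QuasiMeasurePreserving (fun w : κ → Z => w ∘ e)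
      (Measure.pi fun _ => μ) (Measure.pi fun _ => μ) := by
  classical
  -- `w ∘ e` is the projection onto the coordinates in `range e`, reindexed by `ι`
  let ι' : ι ≃ {i // ∃ j, e j = i} := Equiv.ofInjective e he
  have hsplit := measurePreserving_piEquivPiSubtypeProd (fun _ : κ => μ) (fun i => ∃ j, e j = i)
  have hreindex := measurePreserving_piCongrLeft (fun _ : {i // ∃ j, e j = i} => μ) ι'
  exact (hreindex.symm _).quasiMeasurePreserving.comp
    (QuasiMeasurePreserving.fst hsplit.quasiMeasurePreserving)

theorem MeasureTheory.Integrable.ae_integrable_insertNth {k : ℕ} {f : (Fin (k + 1) → Z) → ℝ}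
    (hf : Integrable f (Measure.pi fun _ => μ)) (p : Fin (k + 1)) :
    ∀ᵐ v ∂(Measure.pi fun _ : Fin k => μ), Integrable (fun z => f (p.insertNth z v)) μ := by
  have hsplit := (measurePreserving_piFinSuccAbove (fun _ : Fin (k + 1) => μ) p).symm
  have hprod : Integrable (fun q : Z × (Fin k → Z) => f (p.insertNth q.1 q.2))
      (μ.prod (Measure.pi fun _ => μ)) :=
    (hsplit.integrable_comp_emb (MeasurableEquiv.measurableEmbedding _)).2 hf
  exact hprod.prod_left_ae

end Measure

theorem Fin.apply_insertNth_eq_apply_snoc_of_perm_invariant {α β : Type*} {k : ℕ}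
    {f : (Fin (k + 1) → α) → β} (hf : ∀ (τ : Equiv.Perm (Fin (k + 1))) x, f (x ∘ τ) = f x)
    (p : Fin (k + 1)) (a : α) (v : Fin k → α) :
    f (p.insertNth a v) = f (Fin.snoc v a) := by
  calc f (p.insertNth a v)
      = f (Fin.cons a v ∘ p.cycleRange) := by rw [Fin.cons_comp_cycleRange]
    _ = f ((Fin.last k).insertNth a v ∘ (Fin.last k).cycleRange.symm) := by
      rw [hf, Fin.insertNth_comp_cycleRange_symm]
    _ = f (Fin.snoc v a) := by rw [hf, Fin.insertNth_last']

theorem Finset.orderEmbOfFin_comp_succAbove {α : Type*} [LinearOrder α] {C : Finset α} {k : ℕ}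
    (hC : #C = k + 1) {p : Fin (k + 1)} {a : α} (hp : C.orderEmbOfFin hC p = a)
    (h : #(C.erase a) = k) :
    C.orderEmbOfFin hC ∘ p.succAbove = (C.erase a).orderEmbOfFin h := by
  refine orderEmbOfFin_unique h (fun j => mem_erase.2 ⟨?_, orderEmbOfFin_mem C hC _⟩)
    ((C.orderEmbOfFin hC).strictMono.comp (Fin.strictMono_succAbove p))
  exact hp ▸ (C.orderEmbOfFin hC).injective.ne (Fin.succAbove_ne p j)

section Blocks

variable {n : ℕ} (ℓ : Fin (n + 1))

/-- The block `B` in the coordinates of `w`, for tuples `x = ℓ.insertNth z w`. -/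
noncomputable def succAbovePreimage (B : Finset (Fin (n + 1))) : Finset (Fin n) :=
  B.preimage ℓ.succAbove Fin.succAbove_right_injective.injOn

variable {ℓ}

theorem mem_succAbovePreimage {B : Finset (Fin (n + 1))} {i : Fin n} :
    i ∈ succAbovePreimage ℓ B ↔ ℓ.succAbove i ∈ B :=
  mem_preimage

theorem card_succAbovePreimage {D : Finset (Fin (n + 1))} (hℓ : ℓ ∉ D) :
    #(succAbovePreimage ℓ D) = #D := by
  classical
  rw [succAbovePreimage, card_preimage]
  congr 1
  refine filter_true_of_mem fun i hi => ?_
  rw [Fin.range_succAbove]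
  exact fun h => hℓ (Set.mem_singleton_iff.1 h ▸ hi)

theorem succAbove_comp_orderEmbOfFin_succAbovePreimage {D : Finset (Fin (n + 1))} {k : ℕ}
    (h : #(succAbovePreimage ℓ D) = k) (h' : #D = k) :
    ℓ.succAbove ∘ (succAbovePreimage ℓ D).orderEmbOfFin h = D.orderEmbOfFin h' :=
  orderEmbOfFin_unique h' (fun j => mem_succAbovePreimage.1 (orderEmbOfFin_mem _ h j))
    ((Fin.strictMono_succAbove ℓ).comp (orderEmbOfFin _ h).strictMono)


variable {Z : Type*} (F : (k : ℕ) → (Fin k → Z) → ℝ)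

theorem blockEval_of_card_eq {m k : ℕ} (z : Fin m → Z) {B : Finset (Fin m)} (h : #B = k) :
    blockEval F z B = F k (z ∘ B.orderEmbOfFin h) := by
  subst h; rfl

theorem blockEval_insertNth_of_notMem {D : Finset (Fin (n + 1))} (hℓ : ℓ ∉ D) (z : Z)
    (w : Fin n → Z) : blockEval F (ℓ.insertNth z w) D = blockEval F w (succAbovePreimage ℓ D) := by
  have hcard := card_succAbovePreimage hℓ
  rw [blockEval_of_card_eq F w hcard, blockEval_of_card_eq F _ rfl,
    ← succAbove_comp_orderEmbOfFin_succAbovePreimage hcard rfl, ← Function.comp_assoc,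
    Fin.insertNth_comp_succAbove]

theorem exists_blockEval_insertNth_of_mem {C : Finset (Fin (n + 1))} (hℓ : ℓ ∈ C) {k : ℕ}
    (hC : #C = k + 1) :
    ∃ p : Fin (k + 1), ∃ e : Fin k → Fin n, Function.Injective e ∧
      (∀ z w, blockEval F (ℓ.insertNth z w) C = F (k + 1) (p.insertNth z (w ∘ e))) ∧
      ∀ w, blockEval F w (succAbovePreimage ℓ (C.erase ℓ)) = F k (w ∘ e) := by
  obtain ⟨p, hp⟩ : ℓ ∈ Set.range (C.orderEmbOfFin hC) := by rwa [range_orderEmbOfFin]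
  have hrest : #(C.erase ℓ) = k := by rw [card_erase_of_mem hℓ, hC, Nat.add_sub_cancel]
  have hrest' : #(succAbovePreimage ℓ (C.erase ℓ)) = k :=
    (card_succAbovePreimage (notMem_erase ℓ C)).trans hrest
  have hsucc : C.orderEmbOfFin hC ∘ p.succAbove =
      ℓ.succAbove ∘ (succAbovePreimage ℓ (C.erase ℓ)).orderEmbOfFin hrest' := by
    rw [succAbove_comp_orderEmbOfFin_succAbovePreimage hrest' hrest]
    exact orderEmbOfFin_comp_succAbove hC hp hrest
  refine ⟨p, _, (orderEmbOfFin _ hrest').injective, fun z w => ?_,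
    fun w => blockEval_of_card_eq F w hrest'⟩
  have hremove : p.removeNth (ℓ.insertNth z w ∘ C.orderEmbOfFin hC) =
      w ∘ (succAbovePreimage ℓ (C.erase ℓ)).orderEmbOfFin hrest' := by
    change _ ∘ (C.orderEmbOfFin hC ∘ p.succAbove) = _
    rw [hsucc, ← Function.comp_assoc, Fin.insertNth_comp_succAbove]
  rw [blockEval_of_card_eq F _ hC, ← Fin.insertNth_self_removeNth p (_ ∘ _), hremove,
    Function.comp_apply, hp, Fin.insertNth_apply_same]

end Blocks

namespace Finpartition

variable {α : Type*} [Fintype α] [DecidableEq α] (ℓ : α)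

theorem notMem_of_mem_erase_part {π : Finpartition (univ : Finset α)} {B : Finset α}
    (hB : B ∈ π.parts.erase (π.part ℓ)) : ℓ ∉ B := fun hℓB =>
  (mem_erase.1 hB).1 (π.part_eq_of_mem (mem_erase.1 hB).2 hℓB).symm

theorem parts_avoid_singleton (π : Finpartition (univ : Finset α)) :
    (π.avoid {ℓ}).parts =
      (insert ((π.part ℓ).erase ℓ) (π.parts.erase (π.part ℓ))).erase ∅ := by
  have hmem : π.part ℓ ∈ π.parts := π.part_mem.2 (mem_univ ℓ)
  have hother : (π.parts.erase (π.part ℓ)).image (· \ {ℓ}) = π.parts.erase (π.part ℓ) := by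
    refine (image_congr fun B hB => ?_).trans image_id
    exact sdiff_singleton_eq_erase ℓ B ▸ erase_eq_of_notMem (notMem_of_mem_erase_part ℓ hB)
  have havoid : (π.avoid {ℓ}).parts = (π.parts.image (· \ {ℓ})).erase ∅ := by
    simp [avoid, ofErase]
  conv_lhs => rw [havoid, ← insert_erase hmem, image_insert, hother]
  rw [sdiff_singleton_eq_erase]

theorem erase_part_notMem_erase_part (π : Finpartition (univ : Finset α)) :
    (π.part ℓ).erase ℓ ∉ π.parts.erase (π.part ℓ) := fun hmem => by
  obtain ⟨hne, hB⟩ := mem_erase.1 hmem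
  obtain ⟨x, hx⟩ := π.nonempty_of_mem_parts hB
  exact hne (π.eq_of_mem_parts hB (π.part_mem.2 (mem_univ ℓ)) hx (mem_of_mem_erase hx))

theorem parts_avoid_singleton_of_erase_part_eq_empty (π : Finpartition (univ : Finset α))
    (h : (π.part ℓ).erase ℓ = ∅) : (π.avoid {ℓ}).parts = π.parts.erase (π.part ℓ) := by
  rw [parts_avoid_singleton, h, erase_insert fun h => π.empty_notMem_parts (mem_of_mem_erase h)]

theorem parts_avoid_singleton_of_erase_part_ne_empty (π : Finpartition (univ : Finset α))
    (h : (π.part ℓ).erase ℓ ≠ ∅) :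
    (π.avoid {ℓ}).parts = insert ((π.part ℓ).erase ℓ) (π.parts.erase (π.part ℓ)) := by
  rw [parts_avoid_singleton, erase_eq_of_notMem]
  rw [mem_insert, not_or]
  exact ⟨Ne.symm h, fun h => π.empty_notMem_parts (mem_of_mem_erase h)⟩

theorem card_parts_eq_card_parts_avoid_singleton_add (π : Finpartition (univ : Finset α)) :
    #π.parts = #(π.avoid {ℓ}).parts + if (π.part ℓ).erase ℓ = ∅ then 1 else 0 := by
  have hcard := card_erase_add_one (π.part_mem.2 (mem_univ ℓ))
  split_ifs with h
  · rw [parts_avoid_singleton_of_erase_part_eq_empty ℓ π h, hcard]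
  · rw [parts_avoid_singleton_of_erase_part_ne_empty ℓ π h,
      card_insert_of_notMem (erase_part_notMem_erase_part ℓ π), hcard]

theorem prod_parts_avoid_singleton {M : Type*} [CommMonoid M] (π : Finpartition (univ : Finset α))
    (g : Finset α → M) :
    ∏ B ∈ (π.avoid {ℓ}).parts, g B =
      (if (π.part ℓ).erase ℓ = ∅ then 1 else g ((π.part ℓ).erase ℓ)) *
        ∏ B ∈ π.parts.erase (π.part ℓ), g B := by
  split_ifs with h
  · rw [parts_avoid_singleton_of_erase_part_eq_empty ℓ π h, one_mul]
  · rw [parts_avoid_singleton_of_erase_part_ne_empty ℓ π h,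
      prod_insert (erase_part_notMem_erase_part ℓ π)]

theorem erase_parts_avoid_singleton (π : Finpartition (univ : Finset α)) :
    (π.avoid {ℓ}).parts.erase ((π.part ℓ).erase ℓ) = π.parts.erase (π.part ℓ) := by
  rw [parts_avoid_singleton, erase_right_comm, erase_insert (erase_part_notMem_erase_part ℓ π),
    erase_eq_of_notMem fun h => π.empty_notMem_parts (mem_of_mem_erase h)]

theorem notMem_of_mem_parts_avoid {π' : Finpartition (univ \ {ℓ} : Finset α)} {C : Finset α}
    (hC : C ∈ π'.parts) : ℓ ∉ C := fun hℓ => by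
  simpa using π'.le hC hℓ

theorem notMem_of_eq_empty_or_mem_parts_avoid {π' : Finpartition (univ \ {ℓ} : Finset α)}
    {C : Finset α} (hC : C = ∅ ∨ C ∈ π'.parts) : ℓ ∉ C :=
  hC.elim (fun h => h ▸ notMem_empty ℓ) (notMem_of_mem_parts_avoid ℓ)

/-- Inverse of `avoid {ℓ}` on its fibres. -/
def insertIntoPart (π' : Finpartition (univ \ {ℓ} : Finset α)) (C : Finset α)
    (hC : C = ∅ ∨ C ∈ π'.parts) : Finpartition (univ : Finset α) where
  parts := insert (insert ℓ C) (π'.parts.erase C)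
  supIndep := by
    rw [supIndep_iff_pairwiseDisjoint, coe_insert]
    refine (π'.disjoint.subset (coe_subset.2 (erase_subset _ _))).insert fun B hB _ => ?_
    obtain ⟨hBC, hB⟩ := mem_erase.1 hB
    refine disjoint_insert_left.2 ⟨notMem_of_mem_parts_avoid ℓ hB, ?_⟩
    rcases hC with rfl | hC
    · exact disjoint_empty_left B
    · exact π'.disjoint hC hB (Ne.symm hBC)
  sup_parts := by
    refine eq_univ_of_forall fun x => mem_sup.2 ?_
    by_cases hx : x = ℓ
    · exact ⟨insert ℓ C, mem_insert_self _ _, hx ▸ mem_insert_self _ _⟩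
    obtain ⟨B, hB, hxB⟩ := π'.exists_mem (mem_sdiff.2 ⟨mem_univ x, notMem_singleton.2 hx⟩)
    by_cases hBC : B = C
    · exact ⟨insert ℓ C, mem_insert_self _ _, mem_insert_of_mem (hBC ▸ hxB)⟩
    · exact ⟨B, mem_insert_of_mem (mem_erase.2 ⟨hBC, hB⟩), hxB⟩
  bot_notMem := by
    rw [bot_eq_empty, mem_insert, not_or]
    exact ⟨(insert_ne_empty _ _).symm, fun h => π'.empty_notMem_parts (mem_of_mem_erase h)⟩

variable {ℓ}

theorem part_insertIntoPart {π' : Finpartition (univ \ {ℓ} : Finset α)} {C : Finset α}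
    (hC : C = ∅ ∨ C ∈ π'.parts) : (insertIntoPart ℓ π' C hC).part ℓ = insert ℓ C :=
  part_eq_of_mem _ (mem_insert_self _ _) (mem_insert_self _ _)

theorem avoid_insertIntoPart {π' : Finpartition (univ \ {ℓ} : Finset α)} {C : Finset α}
    (hC : C = ∅ ∨ C ∈ π'.parts) : (insertIntoPart ℓ π' C hC).avoid {ℓ} = π' := by
  have hℓC := notMem_of_eq_empty_or_mem_parts_avoid ℓ hC
  have hnew : insert ℓ C ∉ π'.parts.erase C := fun h =>
    notMem_of_mem_parts_avoid ℓ (mem_of_mem_erase h) (mem_insert_self ℓ C)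
  ext1
  rw [parts_avoid_singleton, part_insertIntoPart, erase_insert hℓC]
  change (insert C ((insert (insert ℓ C) (π'.parts.erase C)).erase (insert ℓ C))).erase ∅ = _
  rw [erase_insert hnew]
  rcases hC with rfl | hC
  · rw [erase_insert (notMem_erase _ _), erase_eq_of_notMem π'.empty_notMem_parts]
  · rw [insert_erase hC, erase_eq_of_notMem π'.empty_notMem_parts]

theorem erase_part_eq_empty_or_mem_parts_avoid (π : Finpartition (univ : Finset α)) :
    (π.part ℓ).erase ℓ = ∅ ∨ (π.part ℓ).erase ℓ ∈ (π.avoid {ℓ}).parts := by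
  refine or_iff_not_imp_left.2 fun h => ?_
  rw [parts_avoid_singleton_of_erase_part_ne_empty ℓ π h]
  exact mem_insert_self _ _

theorem insertIntoPart_avoid (π : Finpartition (univ : Finset α)) :
    insertIntoPart ℓ (π.avoid {ℓ}) ((π.part ℓ).erase ℓ)
      (erase_part_eq_empty_or_mem_parts_avoid π) = π := by
  ext1
  change insert (insert ℓ ((π.part ℓ).erase ℓ)) ((π.avoid {ℓ}).parts.erase ((π.part ℓ).erase ℓ))
    = π.parts
  rw [insert_erase (π.mem_part (mem_univ ℓ)), erase_parts_avoid_singleton,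
    insert_erase (π.part_mem.2 (mem_univ ℓ))]

variable (ℓ)

/-- The fibre of `avoid {ℓ}` over `π'` consists of one partition with one more part
(`{ℓ}` added) and `#π'.parts` partitions with as many parts (`ℓ` added to a part). -/
theorem sum_avoid_singleton {M : Type*} [AddCommMonoid M]
    (f : ℕ → Finpartition (univ \ {ℓ} : Finset α) → M) :
    ∑ π : Finpartition (univ : Finset α), f #π.parts (π.avoid {ℓ}) =
      ∑ π' : Finpartition (univ \ {ℓ} : Finset α),
        (f (#π'.parts + 1) π' + #π'.parts • f #π'.parts π') := by
  have hsigma : ∑ π : Finpartition (univ : Finset α), f #π.parts (π.avoid {ℓ}) =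
      ∑ q ∈ univ.sigma fun π' : Finpartition (univ \ {ℓ} : Finset α) => insert ∅ π'.parts,
        f (#q.1.parts + if q.2 = ∅ then 1 else 0) q.1 := by
    refine sum_bij' (fun π _ => ⟨π.avoid {ℓ}, (π.part ℓ).erase ℓ⟩)
      (fun q hq => insertIntoPart ℓ q.1 q.2 (mem_insert.1 (mem_sigma.1 hq).2))
      (fun π _ => mem_sigma.2 ⟨mem_univ _, mem_insert.2 (erase_part_eq_empty_or_mem_parts_avoid π)⟩)
      (fun _ _ => mem_univ _) (fun π _ => insertIntoPart_avoid π) ?_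
      (fun π _ => by rw [← card_parts_eq_card_parts_avoid_singleton_add])
    rintro ⟨π', C⟩ hq
    have hC := mem_insert.1 (mem_sigma.1 hq).2
    exact Sigma.ext (avoid_insertIntoPart hC) (heq_of_eq (by
      rw [part_insertIntoPart, erase_insert (notMem_of_eq_empty_or_mem_parts_avoid ℓ hC)]))
  rw [hsigma, sum_sigma]
  refine sum_congr rfl fun π' _ => ?_
  dsimp only
  rw [sum_insert π'.empty_notMem_parts, if_pos rfl,
    sum_congr rfl fun C hC => by rw [if_neg (π'.ne_empty hC), add_zero], sum_const]

end Finpartition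

noncomputable def moebiusCoeff (j : ℕ) : ℝ := ((j - 1).factorial : ℝ) * (-1 : ℝ) ^ (j - 1)

theorem moebiusCoeff_succ_add_mul {j : ℕ} (hj : 1 ≤ j) :
    moebiusCoeff (j + 1) + j * moebiusCoeff j = 0 := by
  obtain ⟨i, rfl⟩ := Nat.exists_eq_add_of_le' hj
  simp only [moebiusCoeff, Nat.add_sub_cancel, Nat.factorial_succ, pow_succ]
  push_cast
  ring

theorem mobiusCorrelation_eq_sum_moebiusCoeff {Z : Type*} (F : (k : ℕ) → (Fin k → Z) → ℝ)
    (m : ℕ) (z : Fin m → Z) :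
    mobiusCorrelation F m z =
      ∑ π : Finpartition (univ : Finset (Fin m)), moebiusCoeff #π.parts *
        ∏ B ∈ π.parts, blockEval F z B :=
  rfl

theorem Finpartition.sum_moebiusCoeff_mul_avoid_singleton {α : Type*} [Fintype α]
    [DecidableEq α] [Nontrivial α] (ℓ : α) (K : Finpartition (univ \ {ℓ} : Finset α) → ℝ) :
    ∑ π : Finpartition (univ : Finset α), moebiusCoeff #π.parts * K (π.avoid {ℓ}) = 0 := by
  rw [sum_avoid_singleton ℓ fun j π' => moebiusCoeff j * K π']
  refine sum_eq_zero fun π' _ => ?_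
  obtain ⟨x, hx⟩ := exists_ne ℓ
  have hparts : 1 ≤ #π'.parts := card_pos.2 (π'.parts_nonempty
    (ne_empty_of_mem (mem_sdiff.2 ⟨mem_univ x, notMem_singleton.2 hx⟩)))
  rw [nsmul_eq_mul, ← mul_assoc, ← add_mul, moebiusCoeff_succ_add_mul hparts, zero_mul]

structure IsConsistentFamily {Z : Type*} [MeasurableSpace Z] (μ : Measure Z) [SigmaFinite μ]
    (N : ℕ) (F : (k : ℕ) → (Fin k → Z) → ℝ) : Prop where
  integrable : ∀ k, 1 ≤ k → k ≤ N → Integrable (F k) (Measure.pi fun _ : Fin k => μ)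
  perm_invariant : ∀ k, 1 ≤ k → k ≤ N → ∀ τ : Equiv.Perm (Fin k), ∀ z : Fin k → Z,
    F k (z ∘ τ) = F k z
  integral_one : ∫ z, F 1 (fun _ => z) ∂μ = 1
  integral_snoc : ∀ k, 1 ≤ k → k + 1 ≤ N →
    ∀ᵐ w ∂(Measure.pi fun _ : Fin k => μ), ∫ z, F (k + 1) (Fin.snoc w z) ∂μ = F k w

namespace IsConsistentFamily

variable {Z : Type*} [MeasurableSpace Z] {μ : Measure Z} [SigmaFinite μ] {N : ℕ}
  {F : (k : ℕ) → (Fin k → Z) → ℝ}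

/-- `F 0` is arbitrary; integrating out the only variable of `F 1` gives `1` instead. -/
theorem ae_integral_insertNth (hF : IsConsistentFamily μ N F) {k : ℕ} (hkN : k + 1 ≤ N)
    (p : Fin (k + 1)) :
    ∀ᵐ v ∂(Measure.pi fun _ : Fin k => μ),
      Integrable (fun z => F (k + 1) (p.insertNth z v)) μ ∧
        ∫ z, F (k + 1) (p.insertNth z v) ∂μ = if k = 0 then 1 else F k v := by
  have hint := (hF.integrable (k + 1) k.succ_pos hkN).ae_integrable_insertNth μ p
  rcases Nat.eq_zero_or_pos k with rfl | hk
  · filter_upwards [hint] with v hv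
    have hconst : ∀ z : Z, p.insertNth z v = fun _ => z := fun z => funext fun i => by
      rw [Fin.fin_one_eq_zero i, Fin.fin_one_eq_zero p, Fin.insertNth_apply_same]
    simp only [hconst] at hv ⊢
    exact ⟨hv, hF.integral_one⟩
  · filter_upwards [hint, hF.integral_snoc k hk hkN] with v hv hsnoc
    simp only [Fin.apply_insertNth_eq_apply_snoc_of_perm_invariant
      (hF.perm_invariant (k + 1) k.succ_pos hkN), if_neg hk.ne'] at hv ⊢
    exact ⟨hv, hsnoc⟩

variable {n : ℕ} {ℓ : Fin (n + 1)}

theorem ae_integral_blockEval_insertNth (hF : IsConsistentFamily μ N F)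
    {C : Finset (Fin (n + 1))} (hℓ : ℓ ∈ C) (hCN : #C ≤ N) :
    ∀ᵐ w ∂(Measure.pi fun _ : Fin n => μ),
      Integrable (fun z => blockEval F (ℓ.insertNth z w) C) μ ∧
        ∫ z, blockEval F (ℓ.insertNth z w) C ∂μ =
          if C.erase ℓ = ∅ then 1 else blockEval F w (succAbovePreimage ℓ (C.erase ℓ)) := by
  obtain ⟨k, hC⟩ : ∃ k, #C = k + 1 := Nat.exists_eq_add_one.2 (card_pos.2 ⟨ℓ, hℓ⟩)
  obtain ⟨p, e, he, hblock, hrest⟩ := exists_blockEval_insertNth_of_mem F hℓ hC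
  have hempty : C.erase ℓ = ∅ ↔ k = 0 := by
    rw [← card_eq_zero, card_erase_of_mem hℓ, hC, Nat.add_sub_cancel]
  filter_upwards [(quasiMeasurePreserving_comp_of_injective μ he).ae
    (hF.ae_integral_insertNth (hC ▸ hCN) p)] with w hw
  simpa only [hblock, hrest, hempty] using hw

theorem ae_integral_prod_blockEval_insertNth (hF : IsConsistentFamily μ N F) (hnN : n + 1 ≤ N)
    (π : Finpartition (univ : Finset (Fin (n + 1)))) :
    ∀ᵐ w ∂(Measure.pi fun _ : Fin n => μ),
      Integrable (fun z => ∏ B ∈ π.parts, blockEval F (ℓ.insertNth z w) B) μ ∧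
        ∫ z, ∏ B ∈ π.parts, blockEval F (ℓ.insertNth z w) B ∂μ =
          ∏ B ∈ (π.avoid {ℓ}).parts, blockEval F w (succAbovePreimage ℓ B) := by
  have hpart := π.part_mem.2 (mem_univ ℓ)
  have hsplit : ∀ z w, ∏ B ∈ π.parts, blockEval F (ℓ.insertNth z w) B =
      blockEval F (ℓ.insertNth z w) (π.part ℓ) *
        ∏ B ∈ π.parts.erase (π.part ℓ), blockEval F w (succAbovePreimage ℓ B) := fun z w => by
    rw [← mul_prod_erase _ _ hpart]
    exact congrArg _ (prod_congr rfl fun B hB =>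
      blockEval_insertNth_of_notMem F (Finpartition.notMem_of_mem_erase_part ℓ hB) z w)
  filter_upwards [hF.ae_integral_blockEval_insertNth (π.mem_part (mem_univ ℓ))
    ((card_le_univ _).trans (by simpa using hnN))] with w hw
  simp only [hsplit, Finpartition.prod_parts_avoid_singleton]
  exact ⟨hw.1.mul_const _, by rw [integral_mul_const, hw.2]⟩

end IsConsistentFamily

theorem correlation_functions_centered_general {Z : Type*} [MeasurableSpace Z]
    (μ : Measure Z) [SigmaFinite μ] (N : ℕ)
    (F : (k : ℕ) → (Fin k → Z) → ℝ)
    (hFint : ∀ k, 1 ≤ k → k ≤ N →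
      Integrable (F k) (Measure.pi fun _ : Fin k => μ))
    (hFsymm : ∀ k, 1 ≤ k → k ≤ N → ∀ τ : Equiv.Perm (Fin k), ∀ z : Fin k → Z,
      F k (z ∘ τ) = F k z)
    (hF1 : ∫ z, F 1 (fun _ => z) ∂μ = 1)
    (hmarg : ∀ k, 1 ≤ k → k + 1 ≤ N →
      ∀ᵐ w ∂(Measure.pi fun _ : Fin k => μ),
        ∫ z, F (k + 1) (Fin.snoc w z) ∂μ = F k w) :
    ∀ n, 1 ≤ n → n + 1 ≤ N → ∀ ℓ : Fin (n + 1),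
      ∀ᵐ w ∂(Measure.pi fun _ : Fin n => μ),
        ∫ z, mobiusCorrelation F (n + 1) (Fin.insertNth ℓ z w) ∂μ = 0 := by
  intro n hn hnN ℓ
  have hF : IsConsistentFamily μ N F := ⟨hFint, hFsymm, hF1, hmarg⟩
  have : Nontrivial (Fin (n + 1)) := Fin.nontrivial_iff_two_le.2 (by omega)
  filter_upwards [ae_all_iff.2 fun π => hF.ae_integral_prod_blockEval_insertNth (ℓ := ℓ) hnN π]
    with w hw
  calc ∫ z, mobiusCorrelation F (n + 1) (ℓ.insertNth z w) ∂μ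
      = ∑ π : Finpartition (univ : Finset (Fin (n + 1))),
          moebiusCoeff #π.parts * ∫ z, ∏ B ∈ π.parts, blockEval F (ℓ.insertNth z w) B ∂μ := by
        simp only [mobiusCorrelation_eq_sum_moebiusCoeff]
        rw [integral_finsetSum _ fun π _ => (hw π).1.const_mul _]
        simp only [integral_const_mul]
    _ = ∑ π : Finpartition (univ : Finset (Fin (n + 1))), moebiusCoeff #π.parts *
          ∏ B ∈ (π.avoid {ℓ}).parts, blockEval F w (succAbovePreimage ℓ B) := by
        exact sum_congr rfl fun π _ => by rw [(hw π).2]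
    _ = 0 := Finpartition.sum_moebiusCoeff_mul_avoid_singleton ℓ
          fun π' => ∏ B ∈ π'.parts, blockEval F w (succAbovePreimage ℓ B)

/-- for symmetric marginals `F_k ∈ L¹(μ^{⊗k})` satisfying the marginal
consistency relations (∫ F_1 dμ = 1 and ∫ F_k(·, z) dμ(z) = F_{k−1} a.e.), the correlation
functions `G_m` defined by the Möbius inversion formula are maximal (centered): for
`2 ≤ m ≤ N` (written `m = n+1` with `1 ≤ n`) and any coordinate `ℓ`, the integral of `G_m`
in the variable `z_ℓ` vanishes for `μ^{⊗(m−1)}`-almost every choice of the other variables. -/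
theorem correlation_functions_centered {Z : Type*} [MeasurableSpace Z]
    (μ : Measure Z) [SigmaFinite μ] (N : ℕ) (hN : 2 ≤ N)
    (F : (k : ℕ) → (Fin k → Z) → ℝ)
    (hFint : ∀ k, 1 ≤ k → k ≤ N →
      Integrable (F k) (Measure.pi fun _ : Fin k => μ))
    (hFsymm : ∀ k, 1 ≤ k → k ≤ N → ∀ τ : Equiv.Perm (Fin k), ∀ z : Fin k → Z,
      F k (z ∘ τ) = F k z)
    (hF1 : ∫ z, F 1 (fun _ => z) ∂μ = 1)
    (hmarg : ∀ k, 1 ≤ k → k + 1 ≤ N →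
      ∀ᵐ w ∂(Measure.pi fun _ : Fin k => μ),
        ∫ z, F (k + 1) (Fin.snoc w z) ∂μ = F k w) :
    ∀ n, 1 ≤ n → n + 1 ≤ N → ∀ ℓ : Fin (n + 1),
      ∀ᵐ w ∂(Measure.pi fun _ : Fin n => μ),
        ∫ z, mobiusCorrelation F (n + 1) (Fin.insertNth ℓ z w) ∂μ = 0 :=
  correlation_functions_centered_general μ N F hFint hFsymm hF1 hmarg
end

section
/- Let Z be a set, N ≥ 1, f : Z → ℝ a function, and for 1 ≤ k ≤ N let F_k : Z^k → ℝ be symmetric functions (with convention F_0 = 1). Define the correlation functions G_m : Z^m → ℝ (1 ≤ m ≤ N) by G_m(z_1,…,z_m) = Σ_{π ⊢ [m]} (#π − 1)! (−1)^{#π−1} Π_{B ∈ π} F_{#B}(z_B), and the linear correlations H_m : Z^m → ℝ (0 ≤ m ≤ N) by H_m(z_1,…,z_m) = Σ_{k=0}^m (−1)^{m−k} Σ_{σ ∈ P^m_k} F_k(z_σ) Π_{i ∈ [m]∖σ} f(z_i). Set G̃_1 := F_1 − f and G̃_m := G_m for 2 ≤ m ≤ N. Then for every 1 ≤ m ≤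 N and every (z_1,…,z_m) ∈ Z^m, H_m(z_1,…,z_m) = Σ_{π ⊢ [m]} Π_{B ∈ π} G̃_{#B}(z_B). -/
open Finset

/-- The linear correlations
`H_m(z) = Σ_{k=0}^m (−1)^{m−k} Σ_{σ ∈ P^m_k} F_k(z_σ) Π_{i ∈ [m]∖σ} f(z_i)`. -/
noncomputable def linearCorrelation {Z : Type*} (F : (k : ℕ) → (Fin k → Z) → ℝ)
    (f : Z → ℝ) (m : ℕ) (z : Fin m → Z) : ℝ :=
  ∑ k ∈ Finset.range (m + 1), (-1 : ℝ) ^ (m - k) *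
    ∑ σ ∈ (Finset.univ : Finset (Fin m)).powersetCard k,
      blockEval F z σ * ∏ i ∈ σᶜ, f (z i)

/-- The modified correlation functions `G̃_1 := F_1 − f` and `G̃_m := G_m` for `m ≠ 1`. -/
noncomputable def tildeCorrelation {Z : Type*} (F : (k : ℕ) → (Fin k → Z) → ℝ)
    (f : Z → ℝ) : (k : ℕ) → (Fin k → Z) → ℝ
  | 1 => fun z => F 1 z - f (z 0)
  | k => fun z => mobiusCorrelation F k z


/-!
The Möbius weights `(k - 1)! (-1)^(k - 1)` satisfy `w k + (k - 1) w (k - 1) = [k = 1]`. Grouping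
the partitions of `s` by the part containing a fixed point `a` turns this into the recursion
`Σ_{a ∈ B ⊆ s} G(B) F(s \ B) = F(s)`, whence by induction the correlation functions invert back
to the marginals: `Σ_{π ⊢ s} Π_{B ∈ π} G(B) = F(s)`. Adding to `G` a perturbation `h` supported
on singletons, each partition splits into the singletons `T` carrying `h` and a partition of
`s \ T` carrying `G`, so `Σ_{π ⊢ s} Π_{B ∈ π} (G + h)(B) = Σ_{T ⊆ s} (Π_{i ∈ T} h {i}) F(s \ T)`.
With `h {i} = -f(z_i)` this is the linear correlation `H_m`.
-/

namespace Finpartition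

lemma eq_indiscrete_of_card_parts_eq_one {α : Type*} [Lattice α] [OrderBot α] {a : α}
    (ha : a ≠ ⊥) (P : Finpartition a) (h : #P.parts = 1) : P = indiscrete ha := by
  obtain ⟨B, hB⟩ := card_eq_one.mp h
  have hBa : B = a := by simpa [hB] using P.sup_parts
  ext1
  rw [hB, hBa]
  rfl

section Finset

variable {α : Type*} [DecidableEq α] {s B : Finset α}

lemma sup_erase_parts (P : Finpartition s) (hB : B ∈ P.parts) :
    (P.parts.erase B).sup id = s \ B := by
  have hdisj : Disjoint B ((P.parts.erase B).sup id) :=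
    supIndep_iff_disjoint_erase.mp P.supIndep B hB
  have hs : B ∪ (P.parts.erase B).sup id = s := by
    have h := P.sup_parts
    rw [← insert_erase hB, sup_insert] at h
    exact h
  exact (union_sdiff_cancel_left hdisj).symm.trans (congrArg (· \ B) hs)

lemma notMem_parts_sdiff (hB : B.Nonempty) (Q : Finpartition (s \ B)) : B ∉ Q.parts := by
  intro h
  obtain ⟨a, ha⟩ := hB
  exact (mem_sdiff.mp (Q.le h ha)).2 ha

lemma sum_filter_mem_parts {M : Type*} [AddCommMonoid M] (hBs : B ⊆ s) (hB : B.Nonempty)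
    (g : Finset (Finset α) → M) :
    ∑ P : Finpartition s with B ∈ P.parts, g P.parts =
      ∑ Q : Finpartition (s \ B), g (insert B Q.parts) := by
  have hBbot : B ≠ ⊥ := hB.ne_empty
  have hsup : s \ B ⊔ B = s := sdiff_union_of_subset hBs
  symm
  refine sum_nbij' (fun Q ↦ Q.extend hBbot sdiff_disjoint hsup)
    (fun P ↦ if h : B ∈ P.parts then P.ofSubset (erase_subset B P.parts) (P.sup_erase_parts h)
      else ⊥) (by simp) (by simp) (fun Q _ ↦ ?_) (fun P hP ↦ ?_) (fun Q _ ↦ by simp)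
  · ext1
    simp [erase_insert (notMem_parts_sdiff hB Q)]
  · have hmem : B ∈ P.parts := by simpa using hP
    ext1
    simp [dif_pos hmem, insert_erase hmem]

lemma card_filter_notMem_parts {a : α} (ha : a ∈ s) (P : Finpartition s) :
    #{B ∈ P.parts | a ∉ B} = #P.parts - 1 := by
  have hpart : {B ∈ P.parts | a ∈ B} = {P.part a} := by
    ext B
    simp only [mem_filter, mem_singleton]
    exact ⟨fun ⟨hB, haB⟩ ↦ (P.part_eq_of_mem hB haB).symm,
      by rintro rfl; exact ⟨P.part_mem.2 ha, P.mem_part_self.2 ha⟩⟩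
  have := card_filter_add_card_filter_not (s := P.parts) (p := (a ∈ ·))
  rw [hpart, card_singleton] at this
  omega

variable {β : Type*} [DecidableEq β] (e : β ↪ α)

def finsetMap {t : Finset β} (P : Finpartition t) : Finpartition (t.map e) where
  parts := P.parts.map (mapEmbedding e).toEmbedding
  supIndep := by
    rw [supIndep_iff_pairwiseDisjoint, coe_map]
    exact (mapEmbedding e).injective.injOn.pairwiseDisjoint_image.2
      fun C hC D hD hCD ↦ (disjoint_map e).2 (P.disjoint hC hD hCD)
  sup_parts := by
    ext x
    simp only [mem_sup, mem_map, RelEmbedding.coe_toEmbedding, mapEmbedding_apply, id,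
      exists_exists_and_eq_and]
    refine ⟨fun ⟨C, hC, b, hb, hx⟩ ↦ ⟨b, P.le hC hb, hx⟩, fun ⟨b, hb, hx⟩ ↦ ?_⟩
    obtain ⟨C, hC, hbC⟩ := P.exists_mem hb
    exact ⟨C, hC, b, hbC, hx⟩
  bot_notMem := by simp

def finsetComap {t : Finset β} (τ : Finpartition (t.map e)) : Finpartition t where
  parts := τ.parts.image fun C ↦ {b ∈ t | e b ∈ C}
  supIndep := by
    rw [supIndep_iff_pairwiseDisjoint, coe_image]
    rintro _ ⟨C, hC, rfl⟩ _ ⟨D, hD, rfl⟩ hne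
    have hCD : C ≠ D := fun h ↦ hne (h ▸ rfl)
    exact disjoint_left.2 fun b hbC hbD ↦
      disjoint_left.1 (τ.disjoint hC hD hCD) (mem_filter.1 hbC).2 (mem_filter.1 hbD).2
  sup_parts := by
    ext b
    simp only [mem_sup, mem_image, mem_filter, id, exists_exists_and_eq_and]
    refine ⟨fun ⟨_, _, hb, _⟩ ↦ hb, fun hb ↦ ?_⟩
    obtain ⟨C, hC, hbC⟩ := τ.exists_mem (mem_map_of_mem e hb)
    exact ⟨C, hC, hb, hbC⟩
  bot_notMem := by
    simp only [bot_eq_empty, mem_image, not_exists, not_and, ← nonempty_iff_ne_empty,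
      filter_nonempty_iff]
    intro C hC
    obtain ⟨x, hx⟩ := τ.nonempty_of_mem_parts hC
    obtain ⟨b, hb, rfl⟩ := mem_map.1 (τ.le hC hx)
    exact ⟨b, hb, hx⟩

def finsetMapEquiv (t : Finset β) : Finpartition t ≃ Finpartition (t.map e) where
  toFun := finsetMap e
  invFun := finsetComap e
  left_inv P := by
    ext1
    simp only [finsetComap, finsetMap, map_eq_image, image_image]
    refine (image_congr fun C hC ↦ ?_).trans image_id
    ext b
    simpa using fun hb ↦ P.le hC hb
  right_inv τ := by
    ext1
    simp only [finsetComap, finsetMap, map_eq_image, image_image]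
    refine (image_congr fun C hC ↦ ?_).trans image_id
    ext x
    simp only [Function.comp_apply, RelEmbedding.coe_toEmbedding, mapEmbedding_apply, mem_map,
      mem_filter, id]
    refine ⟨fun ⟨b, ⟨_, hb⟩, hbx⟩ ↦ hbx ▸ hb, fun hx ↦ ?_⟩
    obtain ⟨b, hb, rfl⟩ := mem_map.1 (τ.le hC hx)
    exact ⟨b, ⟨hb, hx⟩, rfl⟩

@[simp] lemma finsetMapEquiv_parts (t : Finset β) (P : Finpartition t) :
    (finsetMapEquiv e t P).parts = P.parts.map (mapEmbedding e).toEmbedding := rfl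

end Finset

end Finpartition

section SetFunctions

variable {α R : Type*} [DecidableEq α]

section CommSemiring

variable [CommSemiring R]

def clusterSum (v : Finset α → R) (s : Finset α) : R :=
  ∑ P : Finpartition s, ∏ B ∈ P.parts, v B

@[simp] lemma clusterSum_empty (v : Finset α → R) : clusterSum v ∅ = 1 := by
  have : Unique (Finpartition (∅ : Finset α)) :=
    inferInstanceAs (Unique (Finpartition (⊥ : Finset α)))
  rw [clusterSum, Fintype.sum_unique, Finpartition.parts_eq_empty_iff.2 rfl, prod_empty]

lemma clusterSum_eq_sum_mul_clusterSum_sdiff (v : Finset α → R) {s : Finset α} {a : α}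
    (ha : a ∈ s) :
    clusterSum v s = ∑ B ∈ s.powerset with a ∈ B, v B * clusterSum v (s \ B) := by
  rw [clusterSum, ← sum_fiberwise_of_maps_to (g := fun P : Finpartition s ↦ P.part a)
    (t := s.powerset.filter (a ∈ ·)) (fun P _ ↦ by simp [P.part_subset, P.mem_part_self.2 ha])]
  refine sum_congr rfl fun B hB ↦ ?_
  obtain ⟨hBs, haB⟩ := mem_filter.mp hB
  have hfiber (P : Finpartition s) : P.part a = B ↔ B ∈ P.parts :=
    ⟨fun h ↦ h ▸ P.part_mem.2 ha, fun h ↦ P.part_eq_of_mem h haB⟩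
  rw [filter_congr fun P _ ↦ hfiber P,
    Finpartition.sum_filter_mem_parts (mem_powerset.mp hBs) ⟨a, haB⟩ fun ps ↦ ∏ C ∈ ps, v C,
    clusterSum, mul_sum]
  exact sum_congr rfl fun Q _ ↦ prod_insert (Q.notMem_parts_sdiff ⟨a, haB⟩)

lemma clusterSum_add_eq_of_mem {u h : Finset α → R} (hh : ∀ B, #B ≠ 1 → h B = 0)
    {s : Finset α} {a : α} (ha : a ∈ s) :
    clusterSum (u + h) s =
      ∑ B ∈ s.powerset with a ∈ B, u B * clusterSum (u + h) (s \ B) +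
        h {a} * clusterSum (u + h) (s.erase a) := by
  rw [clusterSum_eq_sum_mul_clusterSum_sdiff _ ha]
  simp only [Pi.add_apply, add_mul, sum_add_distrib]
  congr 1
  rw [sum_eq_single_of_mem {a} (by simp [ha]), sdiff_singleton_eq_erase]
  intro B hB hBa
  rw [hh B fun h1 ↦ hBa ?_, zero_mul]
  obtain ⟨b, rfl⟩ := card_eq_one.mp h1
  simp_all

lemma sum_powerset_prod_mul_clusterSum_sdiff_eq_of_mem (u : Finset α → R) (g : α → R)
    {s : Finset α} {a : α} (ha : a ∈ s) :
    ∑ T ∈ s.powerset, (∏ i ∈ T, g i) * clusterSum u (s \ T) =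
      ∑ B ∈ s.powerset with a ∈ B,
          u B * ∑ T ∈ (s \ B).powerset, (∏ i ∈ T, g i) * clusterSum u ((s \ B) \ T) +
        g a * ∑ T ∈ (s.erase a).powerset, (∏ i ∈ T, g i) * clusterSum u (s.erase a \ T) := by
  rw [← insert_erase ha, sum_powerset_insert (notMem_erase a s), insert_erase ha]
  congr 1
  · calc ∑ T ∈ (s.erase a).powerset, (∏ i ∈ T, g i) * clusterSum u (s \ T)
        = ∑ T ∈ (s.erase a).powerset, ∑ B ∈ (s \ T).powerset with a ∈ B,
            (∏ i ∈ T, g i) * (u B * clusterSum u ((s \ T) \ B)) := by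
          refine sum_congr rfl fun T hT ↦ ?_
          have haT : a ∈ s \ T := mem_sdiff.mpr ⟨ha, (subset_erase.mp (mem_powerset.mp hT)).2⟩
          rw [clusterSum_eq_sum_mul_clusterSum_sdiff u haT, mul_sum]
      _ = _ := by
          simp only [mul_sum]
          refine sum_comm' (fun T B ↦ ?_) |>.trans (sum_congr rfl fun B _ ↦ sum_congr rfl
            fun T _ ↦ by rw [sdiff_sdiff_comm]; ring)
          simp only [mem_filter, mem_powerset, subset_sdiff, subset_erase]
          exact ⟨fun ⟨⟨hTs, _⟩, ⟨hBs, hBT⟩, haB⟩ ↦ ⟨⟨hTs, hBT.symm⟩, hBs, haB⟩,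
            fun ⟨⟨hTs, hTB⟩, hBs, haB⟩ ↦ ⟨⟨hTs, fun haT ↦ disjoint_left.mp hTB haT haB⟩,
              ⟨hBs, hTB.symm⟩, haB⟩⟩
  · rw [mul_sum]
    refine sum_congr rfl fun T hT ↦ ?_
    have haT : a ∉ T := (subset_erase.mp (mem_powerset.mp hT)).2
    rw [prod_insert haT, sdiff_insert, erase_sdiff_comm, mul_assoc]

lemma clusterSum_add_of_card_ne_one (u h : Finset α → R) (hh : ∀ B, #B ≠ 1 → h B = 0)
    (s : Finset α) :
    clusterSum (u + h) s = ∑ T ∈ s.powerset, (∏ i ∈ T, h {i}) * clusterSum u (s \ T) := by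
  induction s using Finset.strongInduction with | H s ih =>
  rcases s.eq_empty_or_nonempty with rfl | ⟨a, ha⟩
  · simp
  rw [clusterSum_add_eq_of_mem hh ha, sum_powerset_prod_mul_clusterSum_sdiff_eq_of_mem u _ ha,
    ih _ (erase_ssubset ha)]
  congr 1
  refine sum_congr rfl fun B hB ↦ ?_
  obtain ⟨hBs, haB⟩ := mem_filter.mp hB
  rw [ih _ (sdiff_ssubset (mem_powerset.mp hBs) ⟨a, haB⟩)]

end CommSemiring

section CommRing

variable [CommRing R]

variable (R) in
/-- The Möbius function `μ(π, 1̂)` of the lattice of set partitions, for `π` with `k` parts. -/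
def mobiusWeight (k : ℕ) : R := ((k - 1).factorial : R) * (-1) ^ (k - 1)

lemma mobiusWeight_add_mul_pred {k : ℕ} (hk : 1 ≤ k) :
    mobiusWeight R k + ((k - 1 : ℕ) : R) * mobiusWeight R (k - 1) = if k = 1 then 1 else 0 := by
  obtain rfl | ⟨n, rfl⟩ : k = 1 ∨ ∃ n, k = n + 2 := by
    rcases k with _ | _ | n <;> simp_all
  · simp [mobiusWeight]
  · simp only [mobiusWeight, Nat.add_sub_cancel, show n + 2 - 1 = n + 1 by omega,
      Nat.factorial_succ]
    push_cast
    ring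

def cumulant (F : Finset α → R) (s : Finset α) : R :=
  ∑ P : Finpartition s, mobiusWeight R #P.parts * ∏ B ∈ P.parts, F B

lemma cumulant_singleton (F : Finset α → R) (a : α) : cumulant F {a} = F {a} := by
  have := (isAtom_singleton a).uniqueFinpartition (P := ⊥)
  rw [cumulant, Fintype.sum_subsingleton _ (Finpartition.indiscrete (singleton_ne_empty a))]
  simp [mobiusWeight, Finpartition.indiscrete]

lemma cumulant_map {β : Type*} [DecidableEq β] (e : β ↪ α) (F : Finset α → R) (t : Finset β) :
    cumulant F (t.map e) = cumulant (fun C ↦ F (C.map e)) t :=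
  (Fintype.sum_equiv (Finpartition.finsetMapEquiv e t) _ _ fun P ↦ by simp).symm

lemma mul_cumulant_sdiff_eq_sum_filter_mem_parts (F : Finset α → R) {s D : Finset α}
    (hDs : D ⊆ s) (hD : D.Nonempty) :
    F D * cumulant F (s \ D) = ∑ P : Finpartition s with D ∈ P.parts,
      mobiusWeight R (#P.parts - 1) * ∏ B ∈ P.parts, F B := by
  rw [Finpartition.sum_filter_mem_parts hDs hD fun ps ↦ mobiusWeight R (#ps - 1) * ∏ B ∈ ps, F B,
    cumulant, mul_sum]
  refine sum_congr rfl fun Q _ ↦ ?_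
  have hQ := Q.notMem_parts_sdiff hD
  rw [card_insert_of_notMem hQ, prod_insert hQ, Nat.add_sub_cancel]
  ring

lemma sum_mul_cumulant_sdiff {F : Finset α → R} (hF : F ∅ = 1) {s : Finset α} {a : α}
    (ha : a ∈ s) : ∑ D ∈ (s.erase a).powerset, F D * cumulant F (s \ D) = F s := by
  have hs : s ≠ ∅ := ne_empty_of_mem ha
  set c : Finpartition s → R := fun P ↦ mobiusWeight R (#P.parts - 1) * ∏ B ∈ P.parts, F B
  -- a partition `P` of `s` has `D` as a part for exactly `#P.parts - 1` sets `D ∌ a`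
  have hcount : ∑ D ∈ (s.erase a).powerset.erase ∅, ∑ P : Finpartition s with D ∈ P.parts, c P =
      ∑ P : Finpartition s, ((#P.parts - 1 : ℕ) : R) * c P := by
    rw [sum_comm' (t' := univ) (s' := fun P ↦ {B ∈ P.parts | a ∉ B})]
    · refine sum_congr rfl fun P _ ↦ ?_
      rw [sum_const, Finpartition.card_filter_notMem_parts ha, nsmul_eq_mul]
    · intro D P
      simp only [mem_erase, mem_powerset, subset_erase, mem_filter, mem_univ, true_and, and_true]
      exact ⟨fun ⟨⟨_, _, haD⟩, hDP⟩ ↦ ⟨hDP, haD⟩,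
        fun ⟨hDP, haD⟩ ↦ ⟨⟨P.ne_empty hDP, P.le hDP, haD⟩, hDP⟩⟩
  have hD (D) (hDmem : D ∈ (s.erase a).powerset.erase ∅) :
      F D * cumulant F (s \ D) = ∑ P : Finpartition s with D ∈ P.parts, c P :=
    mul_cumulant_sdiff_eq_sum_filter_mem_parts F
      ((mem_powerset.mp (mem_of_mem_erase hDmem)).trans (erase_subset a s))
      (nonempty_iff_ne_empty.mpr (ne_of_mem_erase hDmem))
  rw [← add_sum_erase _ _ (empty_mem_powerset _), hF, one_mul, sdiff_empty, sum_congr rfl hD,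
    hcount, cumulant, ← sum_add_distrib]
  calc ∑ P : Finpartition s, (mobiusWeight R #P.parts * ∏ B ∈ P.parts, F B +
        ((#P.parts - 1 : ℕ) : R) * c P)
      = ∑ P : Finpartition s, (if #P.parts = 1 then 1 else 0) * ∏ B ∈ P.parts, F B := by
        refine sum_congr rfl fun P _ ↦ ?_
        rw [← mobiusWeight_add_mul_pred (card_pos.mpr (P.parts_nonempty hs))]
        ring
    _ = F s := by
        rw [Fintype.sum_eq_single (Finpartition.indiscrete hs) fun P hP ↦ ?_]
        · simp [Finpartition.indiscrete]
        · rw [if_neg fun h ↦ hP (P.eq_indiscrete_of_card_parts_eq_one hs h), zero_mul]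

theorem clusterSum_cumulant {F : Finset α → R} (hF : F ∅ = 1) (s : Finset α) :
    clusterSum (cumulant F) s = F s := by
  induction s using Finset.strongInduction with | H s ih =>
  rcases s.eq_empty_or_nonempty with rfl | ⟨a, ha⟩
  · rw [clusterSum_empty, hF]
  rw [clusterSum_eq_sum_mul_clusterSum_sdiff _ ha, ← sum_mul_cumulant_sdiff hF ha]
  refine sum_nbij' (s \ ·) (s \ ·) (fun B hB ↦ ?_) (fun D hD ↦ ?_) (fun B hB ↦ ?_)
    (fun D hD ↦ ?_) (fun B hB ↦ ?_) <;>
    simp only [mem_filter, mem_powerset, subset_erase] at *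
  · exact ⟨sdiff_subset, fun h ↦ (mem_sdiff.1 h).2 hB.2⟩
  · exact ⟨sdiff_subset, mem_sdiff.2 ⟨ha, hD.2⟩⟩
  · exact Finset.sdiff_sdiff_eq_self hB.1
  · exact Finset.sdiff_sdiff_eq_self hD.1
  · rw [Finset.sdiff_sdiff_eq_self hB.1, ih _ (sdiff_ssubset hB.1 ⟨a, hB.2⟩), mul_comm]

end CommRing

end SetFunctions

section BlockEval

variable {Z : Type*} (F : (k : ℕ) → (Fin k → Z) → ℝ) {m : ℕ} (z : Fin m → Z)

lemma blockEval_eq_of_card_eq {B : Finset (Fin m)} {k : ℕ} (h : #B = k) :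
    blockEval F z B = F k (fun j ↦ z (B.orderEmbOfFin h j)) := by
  subst h
  rfl

lemma blockEval_singleton (i : Fin m) : blockEval F z {i} = F 1 fun _ ↦ z i := by
  simp [blockEval_eq_of_card_eq F z (card_singleton i)]

lemma blockEval_comp_orderEmbedding {k : ℕ} (e : Fin k ↪o Fin m) (C : Finset (Fin k)) :
    blockEval F (z ∘ e) C = blockEval F z (C.map e.toEmbedding) := by
  have hcard : #(C.map e.toEmbedding) = #C := card_map _
  have he : ⇑e ∘ C.orderEmbOfFin rfl = (C.map e.toEmbedding).orderEmbOfFin hcard :=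
    orderEmbOfFin_unique hcard (fun j ↦ mem_map_of_mem _ (C.orderEmbOfFin_mem rfl j))
      (e.strictMono.comp (C.orderEmbOfFin rfl).strictMono)
  rw [blockEval_eq_of_card_eq F z hcard, ← he]
  rfl

lemma blockEval_mobiusCorrelation (B : Finset (Fin m)) :
    blockEval (mobiusCorrelation F) z B = cumulant (blockEval F z) B := by
  set e := B.orderEmbOfFin rfl
  calc blockEval (mobiusCorrelation F) z B = cumulant (blockEval F (z ∘ e)) univ := rfl
    _ = cumulant (blockEval F z) (univ.map e.toEmbedding) := by
        simp only [cumulant_map, ← blockEval_comp_orderEmbedding]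
    _ = cumulant (blockEval F z) B := by rw [map_orderEmbOfFin_univ]

lemma tildeCorrelation_of_ne_one (f : Z → ℝ) {k : ℕ} (hk : k ≠ 1) :
    tildeCorrelation F f k = mobiusCorrelation F k := by
  match k, hk with
  | 0, _ => rfl
  | n + 2, _ => rfl

lemma blockEval_tildeCorrelation (f : Z → ℝ) :
    blockEval (tildeCorrelation F f) z =
      cumulant (blockEval F z) + fun B ↦ if #B = 1 then -∏ i ∈ B, f (z i) else 0 := by
  funext B
  by_cases hB : #B = 1
  · obtain ⟨i, rfl⟩ := card_eq_one.mp hB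
    simp only [Pi.add_apply, blockEval_singleton, cumulant_singleton, card_singleton,
      prod_singleton, if_true]
    rfl
  · rw [Pi.add_apply, if_neg hB, add_zero, ← blockEval_mobiusCorrelation]
    simp only [blockEval, tildeCorrelation_of_ne_one F f hB]

lemma linearCorrelation_eq_sum_prod_neg_mul (f : Z → ℝ) :
    linearCorrelation F f m z = ∑ T : Finset (Fin m), (∏ i ∈ T, -f (z i)) * blockEval F z Tᶜ := by
  rw [← Fintype.sum_equiv (compl_involutive.toPerm _)
    (fun σ ↦ (∏ i ∈ σᶜ, -f (z i)) * blockEval F z σ) _ fun σ ↦ by simp, ← powerset_univ,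
    sum_powerset, card_univ, Fintype.card_fin, linearCorrelation]
  refine sum_congr rfl fun k _ ↦ ?_
  rw [mul_sum]
  refine sum_congr rfl fun σ hσ ↦ ?_
  rw [prod_neg, card_compl, Fintype.card_fin, (mem_powersetCard.mp hσ).2]
  ring

end BlockEval

theorem linearCorrelation_cluster_expansion_general {Z : Type*} (N : ℕ)
    (f : Z → ℝ) (F : (k : ℕ) → (Fin k → Z) → ℝ)
    (hF0 : ∀ z : Fin 0 → Z, F 0 z = 1) :
    ∀ m, 1 ≤ m → m ≤ N → ∀ z : Fin m → Z,
      linearCorrelation F f m z =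
        ∑ π : Finpartition (Finset.univ : Finset (Fin m)),
          ∏ B ∈ π.parts, blockEval (tildeCorrelation F f) z B := by
  intro m _ _ z
  have hF : blockEval F z ∅ = 1 := hF0 _
  calc linearCorrelation F f m z
      = ∑ T ∈ univ.powerset, (∏ i ∈ T, -f (z i)) *
          clusterSum (cumulant (blockEval F z)) (univ \ T) := by
        simp [linearCorrelation_eq_sum_prod_neg_mul, clusterSum_cumulant hF, compl_eq_univ_sdiff]
    _ = clusterSum (blockEval (tildeCorrelation F f) z) univ := by
        rw [blockEval_tildeCorrelation, clusterSum_add_of_card_ne_one _ _ fun B hB ↦ if_neg hB]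
        simp

/-- Lemma 3.3 of the paper: for symmetric marginals `F_m`, the linear
correlations satisfy the same cluster expansion in terms of the nonlinear correlation
functions as the marginals do, up to replacing `G_1 = F_1` by `G̃_1 = F_1 − f`:
`H_m(z) = Σ_{π ⊢ [m]} Π_{B ∈ π} G̃_{#B}(z_B)` for all `1 ≤ m ≤ N`. -/
theorem linearCorrelation_cluster_expansion {Z : Type*} (N : ℕ) (hN : 1 ≤ N)
    (f : Z → ℝ) (F : (k : ℕ) → (Fin k → Z) → ℝ)
    (hF0 : ∀ z : Fin 0 → Z, F 0 z = 1)
    (hFsymm : ∀ k, 1 ≤ k → k ≤ N → ∀ τ : Equiv.Perm (Fin k), ∀ z : Fin k → Z,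
      F k (z ∘ τ) = F k z) :
    ∀ m, 1 ≤ m → m ≤ N → ∀ z : Fin m → Z,
      linearCorrelation F f m z =
        ∑ π : Finpartition (Finset.univ : Finset (Fin m)),
          ∏ B ∈ π.parts, blockEval (tildeCorrelation F f) z B :=
  linearCorrelation_cluster_expansion_general N f F hF0
end

section
/- Let (Z, μ) be a measure space, N ≥ 1, and for 1 ≤ k ≤ N let F_k ∈ L¹(μ^{⊗k}) be symmetric functions satisfying the marginal consistency relations: for all 2 ≤ k ≤ N, ∫_Z F_k(z_1,…,z_{k−1}, z) dμ(z) = F_{k−1}(z_1,…,z_{k−1}) for μ^{⊗(k−1)}-almost every (z_1,…,z_{k−1}) (with convention F_0 = 1 and ∫_Z F_1 dμ = 1). Let f ∈ L¹(μ) and let φ : Z → ℝ be a bounded measurable function. Define the linear correlations H_m : Z^m → ℝ for 0 ≤ m ≤ N by H_m(z_1,…,z_m) = Σ_{k=0}^m (−1)^{m−k} Σ_{σ ∈ P^m_k} F_k(z_σ) Π_{i ∈ [m]∖σ} f(z_i). Then for every 1 ≤ m ≤ N, ∫_{Z^m} Π_{i=1}^m φ(z_i) · H_m(z_1,…,z_m)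 dμ^{⊗m} = ∫_{Z^m} Π_{i=1}^m (φ(z_i) − ∫_Z φ f dμ) · F_m(z_1,…,z_m) dμ^{⊗m}. -/
open Finset MeasureTheory

/-! Write `c = ∫ φ f dμ` and `A_k = ∫ φ^{⊗k} F_k dμ^{⊗k}`. Expanding `∏ (φ(z_i) - c)` over subsets
`t ⊆ [m]`, each term is `(-c)^{m-|t|} ∫ ∏_{i ∈ t} φ(z_i) F_m(z)`; symmetry of `F_m` moves a
coordinate outside `t` to the last place, where the consistency relation integrates it out, so the
integral is `A_{|t|}`. Each term of `H_m` instead factorises by Fubini over `σ` and `[m] ∖ σ`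
into `A_{|σ|} c^{m-|σ|}`. Grouping subsets by cardinality, the two sums agree. -/

theorem abs_prod_comp_le_pow {Z ι : Type*} {φ : Z → ℝ} {M : ℝ} (hM : ∀ x, |φ x| ≤ M)
    (s : Finset ι) (z : ι → Z) : |∏ i ∈ s, φ (z i)| ≤ M ^ #s := by
  rw [abs_prod, ← prod_const]
  exact prod_le_prod (fun _ _ => abs_nonneg _) fun _ _ => hM _

theorem MeasureTheory.Integrable.prod_comp_mul {Z ι : Type*} [MeasurableSpace Z]
    {ν : Measure (ι → Z)} {φ : Z → ℝ} {M : ℝ} (hφ : Measurable φ) (hM : ∀ x, |φ x| ≤ M)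
    (s : Finset ι) {g : (ι → Z) → ℝ} (hg : Integrable g ν) :
    Integrable (fun z => (∏ i ∈ s, φ (z i)) * g z) ν :=
  hg.bdd_mul (measurable_prod s fun i _ => hφ.comp (measurable_pi_apply i)).aestronglyMeasurable
    (.of_forall fun z => abs_prod_comp_le_pow hM s z)

section PiMeasure
variable {Z : Type*} [MeasurableSpace Z] (μ : Measure Z) [SigmaFinite μ]

theorem integral_pi_comp_equiv {ι κ : Type*} [Fintype ι] [Fintype κ] (e : ι ≃ κ)
    (g : (ι → Z) → ℝ) :
    ∫ z : κ → Z, g (z ∘ e) ∂Measure.pi (fun _ => μ) = ∫ w, g w ∂Measure.pi (fun _ => μ) :=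
  (measurePreserving_arrowCongr' (fun _ => μ) (fun _ => μ) e.symm (MeasurableEquiv.refl Z)
    fun _ => .id μ).integral_comp' g

theorem integrable_pi_comp_equiv {ι κ : Type*} [Fintype ι] [Fintype κ] (e : ι ≃ κ)
    {g : (ι → Z) → ℝ} (hg : Integrable g (Measure.pi fun _ => μ)) :
    Integrable (fun z : κ → Z => g (z ∘ e)) (Measure.pi fun _ => μ) :=
  (measurePreserving_arrowCongr' (fun _ => μ) (fun _ => μ) e.symm (MeasurableEquiv.refl Z)
    fun _ => .id μ).integrable_comp_emb (MeasurableEquiv.measurableEmbedding _) |>.mpr hg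

theorem integral_mul_restrict_compl {ι : Type*} [Fintype ι] [DecidableEq ι] (s : Finset ι)
    (G : (s → Z) → ℝ) (H : ({i // i ∉ s} → Z) → ℝ) :
    ∫ z : ι → Z, G (fun i => z i) * H (fun i => z i) ∂Measure.pi (fun _ => μ)
      = (∫ u, G u ∂Measure.pi fun _ => μ) * ∫ v, H v ∂Measure.pi fun _ => μ := by
  rw [← integral_prod_mul]
  convert (measurePreserving_piEquivPiSubtypeProd (fun _ => μ) (· ∈ s)).integral_comp'
    fun p => G p.1 * H p.2 <;> rfl

theorem MeasureTheory.Integrable.mul_restrict_compl {ι : Type*} [Fintype ι] [DecidableEq ι]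
    {s : Finset ι} {G : (s → Z) → ℝ} {H : ({i // i ∉ s} → Z) → ℝ}
    (hG : Integrable G (Measure.pi fun _ => μ)) (hH : Integrable H (Measure.pi fun _ => μ)) :
    Integrable (fun z : ι → Z => G (fun i => z i) * H (fun i => z i))
      (Measure.pi fun _ => μ) := by
  refine (measurePreserving_piEquivPiSubtypeProd (fun _ => μ) (· ∈ s)).integrable_comp_emb
    (MeasurableEquiv.measurableEmbedding _) (g := fun p => G p.1 * H p.2) |>.mpr ?_
  convert hG.mul_prod hH

theorem integral_pi_eq_integral_snoc {n : ℕ} {g : (Fin (n + 1) → Z) → ℝ}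
    (hg : Integrable g (Measure.pi fun _ => μ)) :
    ∫ z, g z ∂Measure.pi (fun _ => μ)
      = ∫ w : Fin n → Z, ∫ x, g (Fin.snoc w x) ∂μ ∂Measure.pi fun _ => μ := by
  have h := (measurePreserving_piFinSuccAbove (fun _ : Fin (n + 1) => μ) (Fin.last n)).symm
  have hsnoc : ∀ p : Z × (Fin n → Z),
      (MeasurableEquiv.piFinSuccAbove (fun _ => Z) (Fin.last n)).symm p = Fin.snoc p.2 p.1 :=
    fun p => Fin.insertNth_last' p.1 p.2
  have hint := h.integrable_comp_emb (MeasurableEquiv.measurableEmbedding _) |>.mpr hg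
  rw [← h.integral_comp']
  exact (integral_prod_symm _ hint).trans (by simp only [Function.comp_apply, hsnoc])

theorem integral_comp_init_mul_of_integral_snoc {n : ℕ} {G : (Fin n → Z) → ℝ}
    {F : (Fin n → Z) → ℝ} {F' : (Fin (n + 1) → Z) → ℝ}
    (hint : Integrable (fun z => G (Fin.init z) * F' z) (Measure.pi fun _ => μ))
    (hmarg : ∀ᵐ w ∂Measure.pi (fun _ => μ), ∫ x, F' (Fin.snoc w x) ∂μ = F w) :
    ∫ z, G (Fin.init z) * F' z ∂Measure.pi (fun _ => μ)
      = ∫ w, G w * F w ∂Measure.pi fun _ => μ := by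
  rw [integral_pi_eq_integral_snoc μ hint]
  refine integral_congr_ae (hmarg.mono fun w hw => ?_)
  simp only [Fin.init_snoc, integral_const_mul, hw]

theorem integral_prod_map_mul_of_comp_perm {ι : Type*} [Fintype ι] (φ : Z → ℝ)
    {G : (ι → Z) → ℝ} (τ : Equiv.Perm ι) (hG : ∀ z, G (z ∘ τ) = G z) (t : Finset ι) :
    ∫ z, (∏ i ∈ t.map τ.toEmbedding, φ (z i)) * G z ∂Measure.pi (fun _ => μ)
      = ∫ z, (∏ i ∈ t, φ (z i)) * G z ∂Measure.pi fun _ => μ := by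
  rw [← integral_pi_comp_equiv μ τ fun z => (∏ i ∈ t, φ (z i)) * G z]
  simp only [Function.comp_apply, hG, prod_map, Equiv.toEmbedding_apply]

end PiMeasure

theorem Finset.exists_map_castSuccEmb {n : ℕ} {t : Finset (Fin (n + 1))} (ht : Fin.last n ∉ t) :
    ∃ s : Finset (Fin n), s.map Fin.castSuccEmb = t := by
  refine ⟨t.preimage Fin.castSucc (Fin.castSucc_injective n).injOn, ?_⟩
  ext i
  induction i using Fin.lastCases with
  | last => simp [ht]
  | cast i => simp

noncomputable def moment {Z : Type*} [MeasurableSpace Z] (μ : Measure Z)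
    (F : (k : ℕ) → (Fin k → Z) → ℝ) (φ : Z → ℝ) (k : ℕ) : ℝ :=
  ∫ w : Fin k → Z, (∏ i, φ (w i)) * F k w ∂Measure.pi fun _ => μ

/-- For `k = 0`, `integral_snoc` is the normalisation `∫ F_1 dμ = 1` under the convention
`F_0 = 1`. -/
structure IsConsistentFamily_s7 {Z : Type*} [MeasurableSpace Z] (μ : Measure Z) (N : ℕ)
    (F : (k : ℕ) → (Fin k → Z) → ℝ) : Prop where
  integrable : ∀ k ≤ N, Integrable (F k) (Measure.pi fun _ => μ)
  comp_perm : ∀ k ≤ N, ∀ (τ : Equiv.Perm (Fin k)) (z : Fin k → Z), F k (z ∘ τ) = F k z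
  integral_snoc : ∀ k, k + 1 ≤ N →
    ∀ᵐ w ∂Measure.pi (fun _ : Fin k => μ), ∫ x, F (k + 1) (Fin.snoc w x) ∂μ = F k w

namespace IsConsistentFamily_s7
variable {Z : Type*} [MeasurableSpace Z] {μ : Measure Z} {N : ℕ}
  {F : (k : ℕ) → (Fin k → Z) → ℝ}

theorem of_zero_eq_one (hF0 : ∀ z : Fin 0 → Z, F 0 z = 1)
    (hFint : ∀ k, 1 ≤ k → k ≤ N → Integrable (F k) (Measure.pi fun _ : Fin k => μ))
    (hFsymm : ∀ k, 1 ≤ k → k ≤ N → ∀ τ : Equiv.Perm (Fin k), ∀ z : Fin k → Z,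
      F k (z ∘ τ) = F k z)
    (hF1 : ∫ z, F 1 (fun _ => z) ∂μ = 1)
    (hmarg : ∀ k, 1 ≤ k → k + 1 ≤ N →
      ∀ᵐ w ∂(Measure.pi fun _ : Fin k => μ), ∫ z, F (k + 1) (Fin.snoc w z) ∂μ = F k w) :
    IsConsistentFamily_s7 μ N F where
  integrable k hk := by
    rcases k.eq_zero_or_pos with rfl | hk0
    · rw [show F 0 = fun _ => 1 from funext hF0, Measure.pi_of_empty]
      exact integrable_const 1
    · exact hFint k hk0 hk
  comp_perm k hk τ z := by
    rcases k.eq_zero_or_pos with rfl | hk0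
    · exact congrArg _ (Subsingleton.elim _ _)
    · exact hFsymm k hk0 hk τ z
  integral_snoc k hk := by
    rcases k.eq_zero_or_pos with rfl | hk0
    · refine .of_forall fun w => ?_
      rw [hF0, ← hF1]
      congr with x i
    · exact hmarg k hk0 hk

variable [SigmaFinite μ] {φ : Z → ℝ} {M : ℝ}

theorem integral_prod_mul_eq_moment (hF : IsConsistentFamily_s7 μ N F) (hφ : Measurable φ)
    (hM : ∀ x, |φ x| ≤ M) {m : ℕ} (hm : m ≤ N) (t : Finset (Fin m)) :
    ∫ z, (∏ i ∈ t, φ (z i)) * F m z ∂Measure.pi (fun _ => μ) = moment μ F φ #t := by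
  induction m with
  | zero =>
    rw [Subsingleton.elim t univ, card_univ, Fintype.card_fin]
    rfl
  | succ n ih =>
    by_cases ht : t = univ
    · subst ht
      rw [card_univ, Fintype.card_fin]
      rfl
    obtain ⟨j, hj⟩ : ∃ j, j ∉ t := by simpa [eq_univ_iff_forall] using ht
    have hlast : Fin.last n ∉ t.map (Equiv.swap j (Fin.last n)).toEmbedding := by
      simpa [Equiv.swap_apply_right] using hj
    obtain ⟨s, hs⟩ := Finset.exists_map_castSuccEmb hlast
    have hint := (hF.integrable _ hm).prod_comp_mul hφ hM (s.map Fin.castSuccEmb)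
    simp only [prod_map] at hint
    calc ∫ z, (∏ i ∈ t, φ (z i)) * F (n + 1) z ∂Measure.pi (fun _ => μ)
        = ∫ z, (∏ i ∈ s, φ (Fin.init z i)) * F (n + 1) z ∂Measure.pi (fun _ => μ) := by
          rw [← integral_prod_map_mul_of_comp_perm μ φ _ (hF.comp_perm _ hm _), ← hs]
          simp only [prod_map]
          rfl
      _ = moment μ F φ #s :=
          (integral_comp_init_mul_of_integral_snoc μ (G := fun w => ∏ i ∈ s, φ (w i)) hint
            (hF.integral_snoc n hm)).trans (ih (by omega) s)
      _ = moment μ F φ #t := by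
          rw [← card_map, hs, card_map]

theorem integral_prod_sub_mul_eq_sum (hF : IsConsistentFamily_s7 μ N F) (hφ : Measurable φ)
    (hM : ∀ x, |φ x| ≤ M) {m : ℕ} (hm : m ≤ N) (c : ℝ) :
    ∫ z, (∏ i, (φ (z i) - c)) * F m z ∂Measure.pi (fun _ => μ)
      = ∑ t ∈ (univ : Finset (Fin m)).powerset, (-c) ^ (m - #t) * moment μ F φ #t := by
  have hexpand (z : Fin m → Z) : (∏ i, (φ (z i) - c)) * F m z
      = ∑ t ∈ (univ : Finset (Fin m)).powerset, (-c) ^ (m - #t) * ((∏ i ∈ t, φ (z i)) * F m z) := by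
    simp only [sub_eq_add_neg, prod_add, prod_const, card_univ_sdiff, Fintype.card_fin, sum_mul]
    exact sum_congr rfl fun t _ => by ring
  simp only [hexpand]
  rw [integral_finsetSum _ fun t _ => ((hF.integrable m hm).prod_comp_mul hφ hM t).const_mul _]
  simp only [integral_const_mul, hF.integral_prod_mul_eq_moment hφ hM hm]

end IsConsistentFamily_s7

theorem blockEval_mul_prod_compl_eq {Z : Type*} {m : ℕ} (F : (k : ℕ) → (Fin k → Z) → ℝ)
    (f : Z → ℝ) (σ : Finset (Fin m)) (z : Fin m → Z) :
    blockEval F z σ * ∏ i ∈ σᶜ, f (z i)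
      = F #σ ((fun i : σ => z i) ∘ σ.orderIsoOfFin rfl) * ∏ i : {i // i ∉ σ}, f (z i) := by
  rw [prod_subtype σᶜ (fun _ => mem_compl)]
  rfl

section LinearCorrelation
variable {Z : Type*} [MeasurableSpace Z] (μ : Measure Z) [SigmaFinite μ]

theorem integrable_prod_mul_blockEval_mul_prod_compl {m : ℕ} {F : (k : ℕ) → (Fin k → Z) → ℝ}
    {f φ : Z → ℝ} {M : ℝ} (σ : Finset (Fin m))
    (hF : Integrable (F #σ) (Measure.pi fun _ => μ)) (hf : Integrable f μ)
    (hφ : Measurable φ) (hM : ∀ x, |φ x| ≤ M) :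
    Integrable (fun z => (∏ i, φ (z i)) * (blockEval F z σ * ∏ i ∈ σᶜ, f (z i)))
      (Measure.pi fun _ => μ) := by
  refine Integrable.prod_comp_mul hφ hM univ ?_
  simp only [blockEval_mul_prod_compl_eq]
  exact (integrable_pi_comp_equiv μ _ hF).mul_restrict_compl μ
    (Integrable.fintype_prod fun _ => hf)

theorem integral_prod_mul_blockEval_mul_prod_compl {m : ℕ} (F : (k : ℕ) → (Fin k → Z) → ℝ)
    (f φ : Z → ℝ) (σ : Finset (Fin m)) :
    ∫ z, (∏ i, φ (z i)) * (blockEval F z σ * ∏ i ∈ σᶜ, f (z i)) ∂Measure.pi (fun _ => μ)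
      = moment μ F φ #σ * (∫ x, φ x * f x ∂μ) ^ (m - #σ) := by
  have hsplit : ∀ z : Fin m → Z, (∏ i, φ (z i)) * (blockEval F z σ * ∏ i ∈ σᶜ, f (z i))
      = ((∏ i : σ, φ (z i)) * F #σ ((fun i : σ => z i) ∘ σ.orderIsoOfFin rfl))
        * ∏ i : {i // i ∉ σ}, φ (z i) * f (z i) := by
    intro z
    rw [blockEval_mul_prod_compl_eq, ← prod_mul_prod_compl σ, prod_mul_distrib,
      ← prod_coe_sort σ, prod_subtype σᶜ (fun _ => mem_compl)]
    ring
  have hmoment : ∫ u : σ → Z, (∏ i, φ (u i)) * F #σ (u ∘ σ.orderIsoOfFin rfl)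
      ∂Measure.pi (fun _ => μ) = moment μ F φ #σ := by
    rw [moment, ← integral_pi_comp_equiv μ (σ.orderIsoOfFin rfl).toEquiv]
    refine integral_congr_ae (.of_forall fun u => ?_)
    simp only [Function.comp_apply, Equiv.prod_comp _ fun i => φ (u i)]
    rfl
  simp only [hsplit]
  refine (integral_mul_restrict_compl μ σ
    (fun u => (∏ i, φ (u i)) * F #σ (u ∘ σ.orderIsoOfFin rfl))
    fun v => ∏ i, φ (v i) * f (v i)).trans ?_
  rw [hmoment, integral_fintype_prod_eq_pow fun x => φ x * f x, Fintype.card_subtype_compl,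
    Fintype.card_coe, Fintype.card_fin]

theorem integral_prod_mul_linearCorrelation_eq_sum {m : ℕ} {F : (k : ℕ) → (Fin k → Z) → ℝ}
    {f φ : Z → ℝ} {M : ℝ} (hF : ∀ k ≤ m, Integrable (F k) (Measure.pi fun _ : Fin k => μ))
    (hf : Integrable f μ) (hφ : Measurable φ) (hM : ∀ x, |φ x| ≤ M) :
    ∫ z, (∏ i, φ (z i)) * linearCorrelation F f m z ∂Measure.pi (fun _ => μ)
      = ∑ k ∈ range (m + 1), ∑ σ ∈ powersetCard k (univ : Finset (Fin m)),
          (-1) ^ (m - k) * (moment μ F φ #σ * (∫ x, φ x * f x ∂μ) ^ (m - #σ)) := by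
  have hint (σ : Finset (Fin m)) :=
    integrable_prod_mul_blockEval_mul_prod_compl μ σ
      (hF _ (card_le_univ σ |>.trans_eq (Fintype.card_fin m))) hf hφ hM
  simp only [linearCorrelation, mul_sum, mul_left_comm _ ((-1 : ℝ) ^ _)]
  rw [integral_finsetSum _ fun k _ => integrable_finsetSum _ fun σ _ => (hint σ).const_mul _]
  refine sum_congr rfl fun k _ => ?_
  rw [integral_finsetSum _ fun σ _ => (hint σ).const_mul _]
  refine sum_congr rfl fun σ _ => ?_
  rw [integral_const_mul, integral_prod_mul_blockEval_mul_prod_compl]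

end LinearCorrelation

theorem linearCorrelation_moment_identity_general {Z : Type*} [MeasurableSpace Z]
    (μ : Measure Z) [SigmaFinite μ] (N : ℕ)
    (F : (k : ℕ) → (Fin k → Z) → ℝ)
    (hF0 : ∀ z : Fin 0 → Z, F 0 z = 1)
    (hFint : ∀ k, 1 ≤ k → k ≤ N →
      Integrable (F k) (Measure.pi fun _ : Fin k => μ))
    (hFsymm : ∀ k, 1 ≤ k → k ≤ N → ∀ τ : Equiv.Perm (Fin k), ∀ z : Fin k → Z,
      F k (z ∘ τ) = F k z)
    (hF1 : ∫ z, F 1 (fun _ => z) ∂μ = 1)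
    (hmarg : ∀ k, 1 ≤ k → k + 1 ≤ N →
      ∀ᵐ w ∂(Measure.pi fun _ : Fin k => μ),
        ∫ z, F (k + 1) (Fin.snoc w z) ∂μ = F k w)
    (f : Z → ℝ) (hf : Integrable f μ)
    (φ : Z → ℝ) (hφmeas : Measurable φ) (hφbdd : ∃ M, ∀ x, |φ x| ≤ M) :
    ∀ m, 1 ≤ m → m ≤ N →
      ∫ z : Fin m → Z, (∏ i, φ (z i)) * linearCorrelation F f m z
          ∂(Measure.pi fun _ : Fin m => μ)
        = ∫ z : Fin m → Z, (∏ i, (φ (z i) - ∫ x, φ x * f x ∂μ)) * F m z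
            ∂(Measure.pi fun _ : Fin m => μ) := by
  intro m _ hmN
  obtain ⟨M, hM⟩ := hφbdd
  have hF := IsConsistentFamily_s7.of_zero_eq_one hF0 hFint hFsymm hF1 hmarg
  rw [integral_prod_mul_linearCorrelation_eq_sum μ (fun k hk => hF.integrable k (hk.trans hmN))
      hf hφmeas hM, hF.integral_prod_sub_mul_eq_sum hφmeas hM hmN, sum_powerset, card_univ,
    Fintype.card_fin]
  refine sum_congr rfl fun k _ => sum_congr rfl fun σ hσ => ?_
  rw [(mem_powersetCard.1 hσ).2, neg_pow]
  ring

/-- for symmetric marginals `F_k ∈ L¹(μ^{⊗k})` satisfying the marginal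
consistency relations, for `f ∈ L¹(μ)` and `φ` bounded measurable, the linear correlations
satisfy `∫ φ^{⊗m} H_m dμ^{⊗m} = ∫ (φ − ∫ φ f dμ)^{⊗m} F_m dμ^{⊗m}` for all `1 ≤ m ≤ N`. -/
theorem linearCorrelation_moment_identity {Z : Type*} [MeasurableSpace Z]
    (μ : Measure Z) [SigmaFinite μ] (N : ℕ) (hN : 1 ≤ N)
    (F : (k : ℕ) → (Fin k → Z) → ℝ)
    (hF0 : ∀ z : Fin 0 → Z, F 0 z = 1)
    (hFint : ∀ k, 1 ≤ k → k ≤ N →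
      Integrable (F k) (Measure.pi fun _ : Fin k => μ))
    (hFsymm : ∀ k, 1 ≤ k → k ≤ N → ∀ τ : Equiv.Perm (Fin k), ∀ z : Fin k → Z,
      F k (z ∘ τ) = F k z)
    (hF1 : ∫ z, F 1 (fun _ => z) ∂μ = 1)
    (hmarg : ∀ k, 1 ≤ k → k + 1 ≤ N →
      ∀ᵐ w ∂(Measure.pi fun _ : Fin k => μ),
        ∫ z, F (k + 1) (Fin.snoc w z) ∂μ = F k w)
    (f : Z → ℝ) (hf : Integrable f μ)
    (φ : Z → ℝ) (hφmeas : Measurable φ) (hφbdd : ∃ M, ∀ x, |φ x| ≤ M) :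
    ∀ m, 1 ≤ m → m ≤ N →
      ∫ z : Fin m → Z, (∏ i, φ (z i)) * linearCorrelation F f m z
          ∂(Measure.pi fun _ : Fin m => μ)
        = ∫ z : Fin m → Z, (∏ i, (φ (z i) - ∫ x, φ x * f x ∂μ)) * F m z
            ∂(Measure.pi fun _ : Fin m => μ) :=
  linearCorrelation_moment_identity_general μ N F hF0 hFint hFsymm hF1 hmarg f hf φ hφmeas hφbdd
end

section
/- Let C ≥ 1, T₀ > 0 and N ≥ 1. Let a_m : [0,T₀] → [0,∞), 0 ≤ m ≤ N, be differentiable functions (with the convention a_m = 0 for m < 0 and for m > N) satisfying, for all 0 ≤ m ≤ N and t ∈ [0,T₀], the differential inequalities a_m'(t) ≤ C m (a_{m−2}(t) + a_{m−1}(t) + a_m(t) + a_{m+1}(t)), with initial conditions a_0(0) ≤ 1 and a_m(0) = 0 for 1 ≤ m ≤ N. Then there exists a time T* ∈ (0, T₀], depending only on C (and not on N or T₀ beyond the constraint T* ≤ T₀), such that a_m(t) ≤ 2^m for all 0 ≤ m ≤ N and all t ∈ [0, T*]. -/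
/-!
Along the characteristic `r(t) = 1 - 8 C t`, the quantity `r Z(t, r) = ∑ₘ r ^ (m + 1) aₘ(t)`
is nonincreasing: after shifting indices, each neighbour term `m r ^ (m + 1) a_{m+k}` of the
differential inequality is dominated by `2 (j + 1) r ^ j a_j` with `j = m + k`, and the four
of them are absorbed by the decrease of `r`. Hence `r(t) ^ (m + 1) aₘ(t) ≤ a₀(0) ≤ 1`, and as
long as `r ≥ 3/4` this gives `aₘ(t) ≤ (4/3) ^ (m + 1) ≤ 2 ^ m` for `m ≥ 1`. The case `m = 0`
holds because the coefficient `C m` vanishes, so `a₀` is nonincreasing.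
-/

open Finset

theorem Finset.sum_comp_add_right_le {G M : Type*} [Add G] [IsRightCancelAdd G]
    [AddCommMonoid M] [PartialOrder M] [IsOrderedAddMonoid M]
    {s : Finset G} {F : G → M} (k : G) (hF : ∀ j ∉ s, F j = 0) (hF₀ : ∀ j ∈ s, 0 ≤ F j) :
    ∑ m ∈ s, F (m + k) ≤ ∑ j ∈ s, F j := by
  classical
  calc ∑ m ∈ s, F (m + k) = ∑ j ∈ s.map (addRightEmbedding k), F j := by simp
    _ = ∑ j ∈ (s.map (addRightEmbedding k)).filter (· ∈ s), F j :=
      (sum_subset (filter_subset _ _) fun j hj hjs =>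
        hF j fun h => hjs (mem_filter.2 ⟨hj, h⟩)).symm
    _ ≤ ∑ j ∈ s, F j :=
      sum_le_sum_of_subset_of_nonneg (fun j hj => (mem_filter.1 hj).2) fun j hj _ => hF₀ j hj

theorem mul_zpow_add_one_le {r : ℝ} (hr₀ : 0 < r) (hr₁ : r ≤ 1) {m j : ℤ} (hj : 0 ≤ j)
    (hjm : j ≤ m + 1) (hmj : m ≤ j + 2) : (m : ℝ) * r ^ (m + 1) ≤ 2 * (j + 1) * r ^ j := by
  have hcoef : (m : ℝ) ≤ 2 * (j + 1) := by
    have : m ≤ 2 * (j + 1) := by omega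
    exact_mod_cast this
  exact mul_le_mul hcoef (zpow_le_zpow_right_of_le_one₀ hr₀ hr₁ hjm) (zpow_pos hr₀ _).le
    (by positivity)

theorem sum_mul_neighbors_le {x : ℤ → ℝ} {N : ℤ} {r : ℝ} (hr₀ : 0 < r) (hr₁ : r ≤ 1)
    (hx : ∀ j ∉ Icc 0 N, x j = 0) (hx₀ : ∀ j ∈ Icc 0 N, 0 ≤ x j) :
    ∑ m ∈ Icc 0 N, m * r ^ (m + 1) * (x (m - 2) + x (m - 1) + x m + x (m + 1)) ≤
      8 * ∑ j ∈ Icc 0 N, (j + 1) * r ^ j * x j := by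
  set F : ℤ → ℝ := fun j => 2 * (j + 1) * r ^ j * x j
  have hshift : ∀ k : ℤ, -2 ≤ k → k ≤ 1 →
      ∑ m ∈ Icc 0 N, m * r ^ (m + 1) * x (m + k) ≤ ∑ j ∈ Icc 0 N, F j := by
    intro k hk₁ hk₂
    refine (sum_le_sum fun m hm => ?_).trans
      (sum_comp_add_right_le k (fun j hj => by simp [F, hx j hj]) fun j hj => ?_)
    · by_cases hj : m + k ∈ Icc 0 N
      · rw [mem_Icc] at hm hj
        exact mul_le_mul_of_nonneg_right
          (mul_zpow_add_one_le hr₀ hr₁ hj.1 (by omega) (by omega)) (hx₀ _ (mem_Icc.2 hj))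
      · simp [F, hx _ hj]
    · have : (0 : ℝ) ≤ j := by exact_mod_cast (mem_Icc.1 hj).1
      have := hx₀ j hj
      positivity
  have h₁ := hshift (-2) le_rfl (by norm_num)
  have h₂ := hshift (-1) (by norm_num) (by norm_num)
  have h₃ := hshift 0 (by norm_num) (by norm_num)
  have h₄ := hshift 1 (by norm_num) le_rfl
  simp only [← sub_eq_add_neg, add_zero] at h₁ h₂ h₃ h₄
  have hF : ∑ j ∈ Icc 0 N, F j = 2 * ∑ j ∈ Icc 0 N, (j + 1) * r ^ j * x j := by
    simp only [F, mul_sum, mul_assoc]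
  simp only [mul_add, sum_add_distrib]
  linarith

theorem antitoneOn_of_hasDerivAt_nonpos {D : Set ℝ} (hD : Convex ℝ D) {f f' : ℝ → ℝ}
    (hf : ∀ x ∈ D, HasDerivAt f (f' x) x) (hf' : ∀ x ∈ D, f' x ≤ 0) : AntitoneOn f D :=
  antitoneOn_of_hasDerivWithinAt_nonpos hD
    (fun x hx => (hf x hx).continuousAt.continuousWithinAt)
    (fun x hx => (hf x (interior_subset hx)).hasDerivWithinAt)
    fun x hx => hf' x (interior_subset hx)

structure IsMomentSubsolution (C T₀ : ℝ) (N : ℕ) (a : ℤ → ℝ → ℝ) : Prop where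
  vanish : ∀ m : ℤ, m < 0 ∨ (N : ℤ) < m → ∀ t : ℝ, a m t = 0
  nonneg : ∀ m : ℤ, 0 ≤ m → m ≤ (N : ℤ) → ∀ t ∈ Set.Icc (0 : ℝ) T₀, 0 ≤ a m t
  differentiableAt : ∀ m : ℤ, 0 ≤ m → m ≤ (N : ℤ) →
    ∀ t ∈ Set.Icc (0 : ℝ) T₀, DifferentiableAt ℝ (a m) t
  deriv_le : ∀ m : ℤ, 0 ≤ m → m ≤ (N : ℤ) → ∀ t ∈ Set.Icc (0 : ℝ) T₀,
    deriv (a m) t ≤ C * (m : ℝ) * (a (m - 2) t + a (m - 1) t + a m t + a (m + 1) t)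

namespace IsMomentSubsolution

variable {C T₀ : ℝ} {N : ℕ} {a : ℤ → ℝ → ℝ}

theorem antitoneOn_zero (ha : IsMomentSubsolution C T₀ N a) :
    AntitoneOn (a 0) (Set.Icc 0 T₀) :=
  antitoneOn_of_hasDerivAt_nonpos (convex_Icc 0 T₀)
    (fun t ht => (ha.differentiableAt 0 le_rfl (Int.natCast_nonneg N) t ht).hasDerivAt)
    fun t ht => by simpa using ha.deriv_le 0 le_rfl (Int.natCast_nonneg N) t ht

theorem antitoneOn_characteristic (ha : IsMomentSubsolution C T₀ N a) (hC : 0 ≤ C) {T : ℝ}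
    (hT : T ≤ T₀) (hρ : ∀ t ∈ Set.Icc 0 T, 0 < 1 - 8 * C * t) :
    AntitoneOn (fun t => ∑ m ∈ Icc 0 (N : ℤ), (1 - 8 * C * t) ^ (m + 1) * a m t)
      (Set.Icc 0 T) := by
  have hsub : Set.Icc 0 T ⊆ Set.Icc 0 T₀ := Set.Icc_subset_Icc_right hT
  have hρ' (t : ℝ) : HasDerivAt (fun t => 1 - 8 * C * t) (-(8 * C)) t := by
    simpa using ((hasDerivAt_id t).const_mul (8 * C)).const_sub 1
  refine antitoneOn_of_hasDerivAt_nonpos (convex_Icc 0 T)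
    (f' := fun t => -(8 * C) * ∑ m ∈ Icc 0 (N : ℤ), (m + 1) * (1 - 8 * C * t) ^ m * a m t +
      ∑ m ∈ Icc 0 (N : ℤ), (1 - 8 * C * t) ^ (m + 1) * deriv (a m) t) (fun t ht => ?_)
    fun t ht => ?_
  · rw [mul_sum, ← sum_add_distrib]
    refine HasDerivAt.fun_sum fun m hm => ?_
    rw [mem_Icc] at hm
    have hpow : HasDerivAt (fun t => (1 - 8 * C * t) ^ (m + 1))
        ((m + 1) * (1 - 8 * C * t) ^ m * -(8 * C)) t := by
      have h := (hasDerivAt_zpow (m + 1) (1 - 8 * C * t) (Or.inr (by omega))).comp t (hρ' t)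
      rw [add_sub_cancel_right, Function.comp_def] at h
      exact_mod_cast h
    exact (hpow.fun_mul (ha.differentiableAt m hm.1 hm.2 t (hsub ht)).hasDerivAt).congr_deriv
      (by ring)
  · have hρ₀ := hρ t ht
    have hρ₁ : 1 - 8 * C * t ≤ 1 := by linarith [mul_nonneg hC ht.1]
    have hderiv : ∑ m ∈ Icc 0 (N : ℤ), (1 - 8 * C * t) ^ (m + 1) * deriv (a m) t ≤
        C * ∑ m ∈ Icc 0 (N : ℤ), m * (1 - 8 * C * t) ^ (m + 1) *
          (a (m - 2) t + a (m - 1) t + a m t + a (m + 1) t) := by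
      rw [mul_sum]
      refine sum_le_sum fun m hm => ?_
      rw [mem_Icc] at hm
      calc _ ≤ (1 - 8 * C * t) ^ (m + 1) *
            (C * m * (a (m - 2) t + a (m - 1) t + a m t + a (m + 1) t)) :=
            mul_le_mul_of_nonneg_left (ha.deriv_le m hm.1 hm.2 t (hsub ht)) (zpow_pos hρ₀ _).le
        _ = _ := by ring
    have hneighbors := sum_mul_neighbors_le (x := fun j => a j t) (N := N) hρ₀ hρ₁
      (fun j hj => ha.vanish j (by rw [mem_Icc] at hj; omega) t)
      fun j hj => by rw [mem_Icc] at hj; exact ha.nonneg j hj.1 hj.2 t (hsub ht)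
    linarith [mul_le_mul_of_nonneg_left hneighbors hC]

theorem zpow_mul_le_initial (ha : IsMomentSubsolution C T₀ N a) (hC : 0 ≤ C) {T : ℝ}
    (hT : T ≤ T₀) (hρ : ∀ t ∈ Set.Icc 0 T, 0 < 1 - 8 * C * t)
    (hinit : ∀ m : ℤ, 1 ≤ m → m ≤ (N : ℤ) → a m 0 = 0) {m : ℤ} (hm₀ : 0 ≤ m) (hmN : m ≤ N)
    {t : ℝ} (ht : t ∈ Set.Icc 0 T) : (1 - 8 * C * t) ^ (m + 1) * a m t ≤ a 0 0 := by
  have hsub : Set.Icc 0 T ⊆ Set.Icc 0 T₀ := Set.Icc_subset_Icc_right hT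
  calc (1 - 8 * C * t) ^ (m + 1) * a m t
      ≤ ∑ j ∈ Icc 0 (N : ℤ), (1 - 8 * C * t) ^ (j + 1) * a j t :=
        single_le_sum (f := fun j => (1 - 8 * C * t) ^ (j + 1) * a j t)
          (fun j hj => mul_nonneg (zpow_pos (hρ t ht) _).le
            (ha.nonneg j (mem_Icc.1 hj).1 (mem_Icc.1 hj).2 t (hsub ht)))
          (mem_Icc.2 ⟨hm₀, hmN⟩)
    _ ≤ ∑ j ∈ Icc 0 (N : ℤ), (1 - 8 * C * 0) ^ (j + 1) * a j 0 :=
        ha.antitoneOn_characteristic hC hT hρ ⟨le_rfl, ht.1.trans ht.2⟩ ht ht.1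
    _ = a 0 0 := by
        rw [sum_eq_single 0 (fun j hj hj0 => ?_) (by simp)]
        · simp
        · rw [mem_Icc] at hj
          rw [hinit j (by omega) hj.2, mul_zero]

end IsMomentSubsolution

theorem one_le_zpow_add_one_mul_two_zpow {r : ℝ} (hr : 3 / 4 ≤ r) {m : ℤ} (hm : 1 ≤ m) :
    1 ≤ r ^ (m + 1) * 2 ^ m := by
  obtain ⟨k, rfl⟩ := Int.eq_ofNat_of_zero_le (by omega : 0 ≤ m)
  have hk : k ≠ 0 := by omega
  rw [show (k : ℤ) + 1 = ((k + 1 : ℕ) : ℤ) by push_cast; rfl, zpow_natCast, zpow_natCast]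
  calc (1 : ℝ) ≤ 3 / 4 * (3 / 2) := by norm_num
    _ ≤ 3 / 4 * (3 / 2) ^ k := by gcongr; exact le_self_pow₀ (by norm_num) hk
    _ = (3 / 4) ^ (k + 1) * 2 ^ k := by
        rw [show (3 / 2 : ℝ) = 3 / 4 * 2 by norm_num, mul_pow]; ring
    _ ≤ r ^ (k + 1) * 2 ^ k := by gcongr

/-- a priori generating-function estimate inside the proof of
Proposition 3.2. Given `C ≥ 1`, there is `ε > 0` depending only on `C` such that for
any `T₀ > 0`, any `N ≥ 1`, and any nonnegative differentiable maps
`a_m : [0,T₀] → [0,∞)`, `0 ≤ m ≤ N` (with the convention `a_m = 0` for `m < 0` and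
`m > N`), satisfying `a_m' ≤ C m (a_{m−2} + a_{m−1} + a_m + a_{m+1})` on `[0,T₀]`,
`a_0(0) ≤ 1` and `a_m(0) = 0` for `1 ≤ m ≤ N`, one has `a_m(t) ≤ 2^m` for all
`0 ≤ m ≤ N` and `t ∈ [0, T*]` where `T* := min ε T₀ ∈ (0,T₀]`. -/
theorem generating_function_apriori_bound (C : ℝ) (hC : 1 ≤ C) :
    ∃ ε : ℝ, 0 < ε ∧
      ∀ (T₀ : ℝ) (_hT₀ : 0 < T₀) (N : ℕ) (_hN : 1 ≤ N) (a : ℤ → ℝ → ℝ)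
        (_hvanish : ∀ m : ℤ, m < 0 ∨ (N : ℤ) < m → ∀ t : ℝ, a m t = 0)
        (_hnonneg : ∀ m : ℤ, 0 ≤ m → m ≤ (N : ℤ) →
          ∀ t ∈ Set.Icc (0 : ℝ) T₀, 0 ≤ a m t)
        (_hdiff : ∀ m : ℤ, 0 ≤ m → m ≤ (N : ℤ) →
          ∀ t ∈ Set.Icc (0 : ℝ) T₀, DifferentiableAt ℝ (a m) t)
        (_hineq : ∀ m : ℤ, 0 ≤ m → m ≤ (N : ℤ) → ∀ t ∈ Set.Icc (0 : ℝ) T₀,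
          deriv (a m) t ≤ C * (m : ℝ) *
            (a (m - 2) t + a (m - 1) t + a m t + a (m + 1) t))
        (_hinit0 : a 0 0 ≤ 1)
        (_hinit : ∀ m : ℤ, 1 ≤ m → m ≤ (N : ℤ) → a m 0 = 0),
        ∀ m : ℤ, 0 ≤ m → m ≤ (N : ℤ) →
          ∀ t : ℝ, 0 ≤ t → t ≤ min ε T₀ → a m t ≤ (2 : ℝ) ^ m := by
  refine ⟨1 / (32 * C), by positivity, ?_⟩
  intro T₀ _ N _ a hvanish hnonneg hdiff hineq hinit0 hinit m hm₀ hmN t ht₀ htT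
  have ha : IsMomentSubsolution C T₀ N a := ⟨hvanish, hnonneg, hdiff, hineq⟩
  set T := min (1 / (32 * C)) T₀
  have hρ : ∀ s ∈ Set.Icc 0 T, 3 / 4 ≤ 1 - 8 * C * s := fun s hs => by
    have h := hs.2.trans (min_le_left _ _)
    rw [le_div_iff₀ (by positivity)] at h
    linarith
  have ht : t ∈ Set.Icc 0 T := ⟨ht₀, htT⟩
  have ht' : t ∈ Set.Icc 0 T₀ := ⟨ht₀, htT.trans (min_le_right _ _)⟩
  rcases hm₀.eq_or_lt with rfl | hm₁
  · simpa using (ha.antitoneOn_zero ⟨le_rfl, ht'.1.trans ht'.2⟩ ht' ht₀).trans hinit0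
  have hbound := ha.zpow_mul_le_initial (by linarith) (min_le_right _ _)
    (fun s hs => by linarith [hρ s hs]) hinit hm₀ hmN ht
  calc a m t ≤ a m t * ((1 - 8 * C * t) ^ (m + 1) * 2 ^ m) :=
        le_mul_of_one_le_right (hnonneg m hm₀ hmN t ht')
          (one_le_zpow_add_one_mul_two_zpow (hρ t ht) hm₁)
    _ = (1 - 8 * C * t) ^ (m + 1) * a m t * 2 ^ m := by ring
    _ ≤ 2 ^ m := mul_le_of_le_one_left (by positivity) (hbound.trans hinit0)
end

section
/- Let C ≥ 1, T₀ > 0 and integers N ≥ 1. Let b_m : [0,T₀] → [0,∞), 1 ≤ m ≤ N, be differentiable functions (with the convention b_{N+1} = 0) satisfying, for all 1 ≤ m ≤ N and t ∈ [0,T₀], the differential inequalities b_m'(t) ≤ C m b_m(t) + C m b_{m+1}(t) + C m³ N^{−2}, with initial conditions b_m(0) = 0 for all 1 ≤ m ≤ N. Then there exists a time T* ∈ (0, T₀], depending only on C, and for each m ≥ 1 a constant C_m, depending only on C and m (and not on N), such that b_m(t) ≤ C_m N^{−2} for all 1 ≤ m ≤ N and all t ∈ [0, T*]. -/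
/-!
Put `Z(t, r) = ∑ₘ (b_m(t) + m²/N²) rᵐ`. Multiplying the differential inequalities by `rᵐ` and
summing, the `b_{m+1}` terms are absorbed after an index shift (this is where `b_{N+1} = 0`
enters), giving `∂ₜZ ≤ 2C ∂ᵣZ` for `0 ≤ r ≤ 1`. Hence `Z` does not increase along the
characteristic `r = 1/2 - 2Ct`, which stays in `[1/4, 1/2]` up to time `1/(8C)`. So
`4⁻ᵐ b_m(t) ≤ Z(t, r(t)) ≤ Z(0, 1/2) = ∑ₘ m² 2⁻ᵐ / N² ≤ 6/N²`.
-/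

open Finset

/-- The coefficient of `rᵐ` is `x m` for `1 ≤ m ≤ N`; `x 0` plays no role. -/
def genFun (N : ℕ) (x : ℕ → ℝ) (r : ℝ) : ℝ :=
  ∑ i ∈ range N, x (i + 1) * r ^ (i + 1)

def genFunDeriv (N : ℕ) (x : ℕ → ℝ) (r : ℝ) : ℝ :=
  ∑ i ∈ range N, (i + 1 : ℝ) * x (i + 1) * r ^ i

theorem genFun_congr {N : ℕ} {x y : ℕ → ℝ} (h : ∀ m, 1 ≤ m → m ≤ N → x m = y m) (r : ℝ) :
    genFun N x r = genFun N y r :=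
  sum_congr rfl fun i hi => by rw [h (i + 1) i.succ_pos (mem_range.1 hi)]

theorem mul_pow_le_genFun {N m : ℕ} {x : ℕ → ℝ} {r : ℝ} (hx : ∀ m, 1 ≤ m → m ≤ N → 0 ≤ x m)
    (hr : 0 ≤ r) (hm₁ : 1 ≤ m) (hmN : m ≤ N) : x m * r ^ m ≤ genFun N x r := by
  obtain ⟨i, rfl⟩ := Nat.exists_eq_add_of_le' hm₁
  exact single_le_sum (f := fun i => x (i + 1) * r ^ (i + 1))
    (fun j hj => mul_nonneg (hx _ j.succ_pos (mem_range.1 hj)) (pow_nonneg hr _))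
    (mem_range.2 hmN)

theorem genFun_sq_half (N : ℕ) :
    genFun N (fun m => (m : ℝ) ^ 2) (1 / 2) = 6 - ((N : ℝ) ^ 2 + 4 * N + 6) / 2 ^ N := by
  induction N with
  | zero => norm_num [genFun]
  | succ n ih =>
    simp only [genFun] at ih ⊢
    rw [sum_range_succ, ih, one_div, inv_pow, pow_succ]
    push_cast
    field_simp
    ring

theorem genFun_sq_div_sq_half_le (N : ℕ) :
    genFun N (fun m => (m : ℝ) ^ 2 / N ^ 2) (1 / 2) ≤ 6 / N ^ 2 := by
  have h : genFun N (fun m => (m : ℝ) ^ 2 / N ^ 2) (1 / 2)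
      = genFun N (fun m => (m : ℝ) ^ 2) (1 / 2) / N ^ 2 := by
    simp only [genFun, sum_div, div_mul_eq_mul_div]
  rw [h, genFun_sq_half]
  gcongr
  have : 0 ≤ ((N : ℝ) ^ 2 + 4 * N + 6) / 2 ^ N := by positivity
  linarith

theorem hasDerivAt_genFun {N : ℕ} {x : ℕ → ℝ → ℝ} {x' : ℕ → ℝ} {ρ : ℝ → ℝ} {ρ' t : ℝ}
    (hx : ∀ m, 1 ≤ m → m ≤ N → HasDerivAt (x m) (x' m) t) (hρ : HasDerivAt ρ ρ' t) :
    HasDerivAt (fun t => genFun N (fun m => x m t) (ρ t))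
      (genFun N x' (ρ t) + ρ' * genFunDeriv N (fun m => x m t) (ρ t)) t := by
  simp only [genFun, genFunDeriv, mul_sum, ← sum_add_distrib]
  refine HasDerivAt.fun_sum fun i hi => ?_
  refine ((hx (i + 1) i.succ_pos (mem_range.1 hi)).fun_mul (hρ.fun_pow (i + 1))).congr_deriv ?_
  rw [Nat.add_sub_cancel]
  push_cast
  ring

theorem genFun_le_two_mul_genFunDeriv {N : ℕ} {C r : ℝ} {a x d : ℕ → ℝ} (hC : 0 ≤ C)
    (hr₀ : 0 ≤ r) (hr₁ : r ≤ 1) (ha : ∀ m, 1 ≤ m → m ≤ N → 0 ≤ a m)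
    (hax : ∀ m, 1 ≤ m → m ≤ N → a m ≤ x m) (haN : a (N + 1) = 0)
    (hd : ∀ m, 1 ≤ m → m ≤ N → d m ≤ C * m * (x m + a (m + 1))) :
    genFun N d r ≤ 2 * C * genFunDeriv N x r := by
  -- `∑ m rᵐ a_{m+1} = ∑ (m - 1) r^{m-1} a_m`, the boundary terms vanishing since `a_{N+1} = 0`
  set u : ℕ → ℝ := fun j => C * j * a (j + 1) * r ^ j
  have hshift : ∑ i ∈ range N, u (i + 1) = ∑ i ∈ range N, u i := by
    have h := (sum_range_succ' u N).symm.trans (sum_range_succ u N)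
    simp only [u, haN] at h ⊢
    simpa using h
  calc genFun N d r
      ≤ ∑ i ∈ range N, (C * (i + 1 : ℝ) * x (i + 1) * r ^ (i + 1) + u (i + 1)) := by
        refine sum_le_sum fun i hi => ?_
        have := mul_le_mul_of_nonneg_right (hd (i + 1) i.succ_pos (mem_range.1 hi))
          (pow_nonneg hr₀ (i + 1))
        simp only [u]
        push_cast at this ⊢
        linarith
    _ = ∑ i ∈ range N, (C * (i + 1 : ℝ) * x (i + 1) * r ^ (i + 1) + u i) := by
        rw [sum_add_distrib, sum_add_distrib, hshift]
    _ ≤ 2 * C * genFunDeriv N x r := by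
        rw [genFunDeriv, mul_sum]
        refine sum_le_sum fun i hi => ?_
        have hiN := mem_range.1 hi
        have ha' := ha (i + 1) i.succ_pos hiN
        have hax' := hax (i + 1) i.succ_pos hiN
        have hx' : 0 ≤ x (i + 1) := ha'.trans hax'
        have h₁ : C * (i + 1 : ℝ) * x (i + 1) * r ^ (i + 1)
            ≤ C * (i + 1 : ℝ) * x (i + 1) * r ^ i :=
          mul_le_mul_of_nonneg_left (pow_le_pow_of_le_one hr₀ hr₁ i.le_succ)
            (mul_nonneg (by positivity) hx')
        have h₂ : u i ≤ C * (i + 1 : ℝ) * x (i + 1) * r ^ i := by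
          simp only [u]
          gcongr
          all_goals linarith
        linarith

theorem genFun_along_characteristic_le {N : ℕ} {C T r₀ : ℝ} {b : ℕ → ℝ → ℝ} {s : ℕ → ℝ}
    (hC : 0 ≤ C) (hr₀ : r₀ ≤ 1) (hs : ∀ m, 1 ≤ m → m ≤ N → 0 ≤ s m)
    (hvanish : ∀ t ∈ Set.Icc 0 T, b (N + 1) t = 0)
    (hnonneg : ∀ m, 1 ≤ m → m ≤ N → ∀ t ∈ Set.Icc 0 T, 0 ≤ b m t)
    (hdiff : ∀ m, 1 ≤ m → m ≤ N → ∀ t ∈ Set.Icc 0 T, DifferentiableAt ℝ (b m) t)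
    (hineq : ∀ m, 1 ≤ m → m ≤ N → ∀ t ∈ Set.Icc 0 T,
      deriv (b m) t ≤ C * m * b m t + C * m * b (m + 1) t + C * m * s m)
    {t : ℝ} (ht : t ∈ Set.Icc 0 T) (hρt : 0 ≤ r₀ - 2 * C * t) :
    genFun N (fun m => b m t + s m) (r₀ - 2 * C * t)
      ≤ genFun N (fun m => b m 0 + s m) r₀ := by
  set Z : ℝ → ℝ := fun u => genFun N (fun m => b m u + s m) (r₀ - 2 * C * u)
  have hsub : Set.Icc 0 t ⊆ Set.Icc 0 T := Set.Icc_subset_Icc_right ht.2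
  have hZ : ∀ u ∈ Set.Icc 0 t, HasDerivAt Z (genFun N (fun m => deriv (b m) u) (r₀ - 2 * C * u)
      + -(2 * C) * genFunDeriv N (fun m => b m u + s m) (r₀ - 2 * C * u)) u := fun u hu =>
    hasDerivAt_genFun (fun m h₁ h₂ => (hdiff m h₁ h₂ u (hsub hu)).hasDerivAt.add_const (s m))
      (by simpa using ((hasDerivAt_id u).const_mul (2 * C)).const_sub r₀)
  have hanti : AntitoneOn Z (Set.Icc 0 t) := by
    refine antitoneOn_of_deriv_nonpos (convex_Icc 0 t)
      (fun u hu => (hZ u hu).continuousAt.continuousWithinAt)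
      (fun u hu => (hZ u (interior_subset hu)).differentiableAt.differentiableWithinAt)
      fun u hu => ?_
    have hu := interior_subset hu
    rw [(hZ u hu).deriv]
    have hρ₀ : 0 ≤ r₀ - 2 * C * u := hρt.trans (by nlinarith [hu.2])
    have hρ₁ : r₀ - 2 * C * u ≤ 1 := by nlinarith [hu.1]
    have := genFun_le_two_mul_genFunDeriv (a := fun m => b m u) hC hρ₀ hρ₁
      (fun m h₁ h₂ => hnonneg m h₁ h₂ u (hsub hu))
      (fun m h₁ h₂ => le_add_of_nonneg_right (hs m h₁ h₂)) (hvanish u (hsub hu))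
      (fun m h₁ h₂ => (hineq m h₁ h₂ u (hsub hu)).trans_eq (by ring))
    linarith
  simpa [Z] using hanti (Set.left_mem_Icc.2 ht.1) (Set.right_mem_Icc.2 ht.1) ht.1

/-- generating-function estimate from Step 1 of the proof of Corollary 1.2.
Given `C ≥ 1`, there are `ε > 0` and constants `C_m` (each depending only on `C` and `m`,
not on `N` or `T₀`) such that for any `T₀ > 0`, any `N ≥ 1`, and any nonnegative
differentiable maps `b_m : [0,T₀] → [0,∞)`, `1 ≤ m ≤ N` (with the convention
`b_{N+1} = 0`), satisfying `b_m' ≤ C m b_m + C m b_{m+1} + C m³ N^{−2}` on `[0,T₀]` and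
`b_m(0) = 0`, one has `b_m(t) ≤ C_m N^{−2}` for all `1 ≤ m ≤ N` and `t ∈ [0, T*]`
where `T* := min ε T₀ ∈ (0,T₀]`. -/
theorem propagation_of_chaos_generating_bound (C : ℝ) (hC : 1 ≤ C) :
    ∃ ε : ℝ, 0 < ε ∧ ∃ Cm : ℕ → ℝ,
      ∀ (T₀ : ℝ) (_hT₀ : 0 < T₀) (N : ℕ) (_hN : 1 ≤ N) (b : ℕ → ℝ → ℝ)
        (_hvanish : ∀ t : ℝ, b (N + 1) t = 0)
        (_hnonneg : ∀ m, 1 ≤ m → m ≤ N → ∀ t ∈ Set.Icc (0 : ℝ) T₀, 0 ≤ b m t)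
        (_hdiff : ∀ m, 1 ≤ m → m ≤ N →
          ∀ t ∈ Set.Icc (0 : ℝ) T₀, DifferentiableAt ℝ (b m) t)
        (_hineq : ∀ m, 1 ≤ m → m ≤ N → ∀ t ∈ Set.Icc (0 : ℝ) T₀,
          deriv (b m) t ≤ C * m * b m t + C * m * b (m + 1) t
            + C * (m : ℝ) ^ 3 / (N : ℝ) ^ 2)
        (_hinit : ∀ m, 1 ≤ m → m ≤ N → b m 0 = 0),
        ∀ m, 1 ≤ m → m ≤ N →
          ∀ t : ℝ, 0 ≤ t → t ≤ min ε T₀ → b m t ≤ Cm m / (N : ℝ) ^ 2 := by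
  have hC₀ : 0 < C := by linarith
  refine ⟨1 / (8 * C), by positivity, fun m => 6 * 4 ^ m, ?_⟩
  intro T₀ _ N _ b hvanish hnonneg hdiff hineq hinit m hm₁ hmN t ht₀ htε
  set s : ℕ → ℝ := fun m => (m : ℝ) ^ 2 / N ^ 2
  have hs : ∀ m, 1 ≤ m → m ≤ N → 0 ≤ s m := fun _ _ _ => by positivity
  have hρ : 1 / 4 ≤ 1 / 2 - 2 * C * t := by
    have : 2 * C * t ≤ 2 * C * (1 / (8 * C)) := by gcongr; exact htε.trans (min_le_left _ _)
    rw [show 2 * C * (1 / (8 * C)) = 1 / 4 by field_simp; norm_num] at this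
    linarith
  have ht : t ∈ Set.Icc 0 T₀ := ⟨ht₀, htε.trans (min_le_right _ _)⟩
  have hZ := genFun_along_characteristic_le (r₀ := 1 / 2) hC₀.le (by norm_num) hs
    (fun u _ => hvanish u) hnonneg hdiff
    (fun m h₁ h₂ u hu => (hineq m h₁ h₂ u hu).trans_eq (by ring)) ht (by linarith)
  have hZ₀ : genFun N (fun m => b m 0 + s m) (1 / 2) = genFun N s (1 / 2) :=
    genFun_congr (fun m h₁ h₂ => by rw [hinit m h₁ h₂, zero_add]) _
  calc b m t = 4 ^ m * (b m t * (1 / 4) ^ m) := by rw [one_div_pow]; field_simp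
    _ ≤ 4 ^ m * ((b m t + s m) * (1 / 2 - 2 * C * t) ^ m) := by
        have hbt := hnonneg m hm₁ hmN t ht
        gcongr
        linarith [hs m hm₁ hmN]
    _ ≤ 4 ^ m * genFun N (fun m => b m t + s m) (1 / 2 - 2 * C * t) := by
        gcongr
        exact mul_pow_le_genFun (fun k h₁ h₂ => add_nonneg (hnonneg k h₁ h₂ t ht) (hs k h₁ h₂))
          (by linarith) hm₁ hmN
    _ ≤ 4 ^ m * (6 / N ^ 2) := by
        gcongr
        exact hZ.trans (hZ₀.trans_le (genFun_sq_div_sq_half_le N))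
    _ = 6 * 4 ^ m / N ^ 2 := by ring
end

section
/- Let n ≥ 1, k ≥ 0 and p be integers with n < p ≤ n + k, and let A, R > 0 be real numbers with p² A ≤ R. Then p^{2p} (A R^{−1})^p ≤ e^{2k} · n^{2n} (A R^{−1})^n. -/
open Real

lemma pow_le_exp_mul_pow {x k : ℝ} {n : ℕ} (hx : 0 ≤ x) (hxk : x ≤ n + k) :
    x ^ n ≤ exp k * n ^ n := by
  rcases n.eq_zero_or_pos with rfl | hn
  · simpa using one_le_exp (by simpa using hx.trans hxk)
  have hn' : (0 : ℝ) < n := by exact_mod_cast hn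
  -- `1 + k/n` written as `1 - -k/n` to match `one_sub_div_pow_le_exp_neg`
  have hx_eq : (n : ℝ) + k = n * (1 - -k / n) := by field_simp; ring
  calc x ^ n ≤ (n * (1 - -k / n)) ^ n := pow_le_pow_left₀ hx (hxk.trans_eq hx_eq) n
    _ = n ^ n * (1 - -k / n) ^ n := mul_pow ..
    _ ≤ n ^ n * exp (- -k) := by gcongr; exact one_sub_div_pow_le_exp_neg (by linarith)
    _ = exp k * n ^ n := by rw [neg_neg, mul_comm]

theorem initial_datum_estimate_general (n k p : ℕ) (hp : n < p) (hpk : p ≤ n + k)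
    (A R : ℝ) (hA : 0 < A) (hR : 0 < R) (hpAR : (p : ℝ) ^ 2 * A ≤ R) :
    (p : ℝ) ^ (2 * p) * (A / R) ^ p ≤ Real.exp (2 * k) * (n : ℝ) ^ (2 * n) * (A / R) ^ n := by
  have hq₀ : 0 ≤ (p : ℝ) ^ 2 * (A / R) := by positivity
  have hq₁ : (p : ℝ) ^ 2 * (A / R) ≤ 1 := by rwa [mul_div_assoc', div_le_one hR]
  have hpn : (p : ℝ) ^ n ≤ exp k * n ^ n :=
    pow_le_exp_mul_pow (Nat.cast_nonneg p) (by exact_mod_cast hpk)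
  calc (p : ℝ) ^ (2 * p) * (A / R) ^ p = ((p : ℝ) ^ 2 * (A / R)) ^ p := by rw [mul_pow, pow_mul]
    _ ≤ ((p : ℝ) ^ 2 * (A / R)) ^ n := pow_le_pow_of_le_one hq₀ hq₁ hp.le
    _ = ((p : ℝ) ^ n) ^ 2 * (A / R) ^ n := by ring
    _ ≤ (exp k * n ^ n) ^ 2 * (A / R) ^ n := by gcongr
    _ = exp (2 * k) * (n : ℝ) ^ (2 * n) * (A / R) ^ n := by
        rw [two_mul (k : ℝ), exp_add, pow_mul]; ring

/-- elementary estimate from Case 2 of the proof of Lemma 2.1: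
for integers `n ≥ 1`, `k ≥ 0`, `p` with `n < p ≤ n + k`, and reals `A, R > 0` with
`p² A ≤ R`, one has `p^{2p} (A/R)^p ≤ e^{2k} · n^{2n} (A/R)^n`. -/
theorem initial_datum_estimate (n k p : ℕ) (hn : 1 ≤ n) (hp : n < p) (hpk : p ≤ n + k)
    (A R : ℝ) (hA : 0 < A) (hR : 0 < R) (hpAR : (p : ℝ) ^ 2 * A ≤ R) :
    (p : ℝ) ^ (2 * p) * (A / R) ^ p ≤ Real.exp (2 * k) * (n : ℝ) ^ (2 * n) * (A / R) ^ n :=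
  initial_datum_estimate_general n k p hp hpk A R hA hR hpAR
end
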